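/- arXiv:1706.07799 — 8 statements merged into one kernel-verified Lean document; each statement's English description precedes it below -/
import Mathlib

section
/- Let F = A^{1/m} be an m-th root Finsler metric on an open subset U ⊆ ℝⁿ. Then F is locally dually flat (i.e. [F²]_{x^k y^l} y^k = 2[F²]_{x^l} for all l in the given coordinates) if and only if for every l and every (x,y) ∈ U × (ℝⁿ ∖ {0}) one has A_{x^l} = (1/(2A)) [ (2/m − 1) A_l A_0 + A A_{0l} ]. -/
open scoped BigOperators

/-- Partial derivative of `f x y` with respect to `y^l` (the second argument). -/
noncomputable def pdy {n : ℕ} (f : (Fin n → ℝ) → (Fin n → ℝ) → ℝ) (l : Fin n) :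
    (Fin n → ℝ) → (Fin n → ℝ) → ℝ :=
  fun x y => fderiv ℝ (f x) y (Pi.single l 1)

/-- Partial derivative of `f x y` with respect to `x^l` (the first argument). -/
noncomputable def pdx {n : ℕ} (f : (Fin n → ℝ) → (Fin n → ℝ) → ℝ) (l : Fin n) :
    (Fin n → ℝ) → (Fin n → ℝ) → ℝ :=
  fun x y => fderiv ℝ (fun x' => f x' y) x (Pi.single l 1)

private lemma prodDiffAt {n m : ℕ} (ι : Fin m → Fin n) (y : Fin n → ℝ) :
    DifferentiableAt ℝ (fun y' : Fin n → ℝ => ∏ j, y' (ι j)) y := by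
  exact (HasFDerivAt.finset_prod (u := Finset.univ)
    fun j _ => hasFDerivAt_apply (𝕜 := ℝ) (ι j) y).differentiableAt

private lemma polyDiffAt {n m : ℕ} (c : (Fin m → Fin n) → ℝ) (y : Fin n → ℝ) :
    DifferentiableAt ℝ (fun y' : Fin n → ℝ => ∑ ι : Fin m → Fin n, c ι * ∏ j, y' (ι j)) y :=
  DifferentiableAt.fun_sum fun ι _ => (prodDiffAt ι y).const_mul (c ι)

private lemma algIff (p a0 b u S T w : ℝ) (hp : p ≠ 0) (ha0 : a0 ≠ 0) (hb : b ≠ 0) :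
    p * b * T + p * (p - 1) * (b / a0) * u * S = 2 * (p * b * w) ↔
      w = 1 / (2 * a0) * ((p - 1) * u * S + a0 * T) := by
  have key : p * b * T + p * (p - 1) * (b / a0) * u * S - 2 * (p * b * w)
      = (p * b / a0) * (((p - 1) * u * S + a0 * T) - 2 * a0 * w) := by
    field_simp
    ring
  have hpb : p * b / a0 ≠ 0 := div_ne_zero (mul_ne_zero hp hb) ha0
  constructor
  · intro h
    have h0 : (p * b / a0) * (((p - 1) * u * S + a0 * T) - 2 * a0 * w) = 0 := by
      rw [← key, h, sub_self]
    have h1 : ((p - 1) * u * S + a0 * T) - 2 * a0 * w = 0 :=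
      (mul_eq_zero.mp h0).resolve_left hpb
    have h2 : 2 * a0 * w = (p - 1) * u * S + a0 * T := (sub_eq_zero.mp h1).symm
    field_simp
    linarith
  · intro h
    have h2 : ((p - 1) * u * S + a0 * T) - 2 * a0 * w = 0 := by
      rw [h]; field_simp; ring
    have := key
    rw [h2, mul_zero] at this
    linarith [sub_eq_zero.mp this]

/-- Let `F = A^{1/m}` be an `m`-th root Finsler metric on an open
subset `U ⊆ ℝⁿ`.  Then `F` is locally dually flat (i.e. `[F²]_{x^k y^l} y^k = 2 [F²]_{x^l}`)
if and only if `A_{x^l} = (1/(2A)) [ (2/m − 1) A_l A_0 + A A_{0l} ]` on `U × (ℝⁿ ∖ {0})`. -/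
theorem locally_dually_flat_mth_root_characterization
    {n m : ℕ} (hm : 2 ≤ m)
    (U : Set (Fin n → ℝ)) (hU : IsOpen U)
    (a : (Fin m → Fin n) → (Fin n → ℝ) → ℝ)
    (ha_smooth : ∀ ι, ContDiffOn ℝ (⊤ : ℕ∞) (a ι) U)
    (ha_symm : ∀ (ι : Fin m → Fin n) (σ : Equiv.Perm (Fin m)), a (ι ∘ σ) = a ι)
    (A : (Fin n → ℝ) → (Fin n → ℝ) → ℝ)
    (hA : ∀ x ∈ U, ∀ y : Fin n → ℝ, A x y = ∑ ι : Fin m → Fin n, a ι x * ∏ k, y (ι k))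
    (hApos : ∀ x ∈ U, ∀ y : Fin n → ℝ, y ≠ 0 → 0 < A x y) :
    -- locally dually flat: [F²]_{x^k y^l} y^k = 2 [F²]_{x^l} where F² = A^{2/m}
    (∀ l : Fin n, ∀ x ∈ U, ∀ y : Fin n → ℝ, y ≠ 0 →
        ∑ k, pdy (pdx (fun x' y' => A x' y' ^ ((2 : ℝ) / (m : ℝ))) k) l x y * y k
          = 2 * pdx (fun x' y' => A x' y' ^ ((2 : ℝ) / (m : ℝ))) l x y)
    ↔
    (∀ l : Fin n, ∀ x ∈ U, ∀ y : Fin n → ℝ, y ≠ 0 →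
        pdx A l x y = (1 / (2 * A x y)) *
          (((2 : ℝ) / (m : ℝ) - 1) * pdy A l x y * (∑ k, pdx A k x y * y k)
            + A x y * (∑ k, pdy (pdx A k) l x y * y k))) := by
  have hm0 : (m : ℝ) ≠ 0 := Nat.cast_ne_zero.mpr (by omega)
  set p : ℝ := (2 : ℝ) / (m : ℝ) with hpdef
  have hp : p ≠ 0 := div_ne_zero two_ne_zero hm0
  have key : ∀ l : Fin n, ∀ x ∈ U, ∀ y : Fin n → ℝ, y ≠ 0 →
      ((∑ k, pdy (pdx (fun x' y' => A x' y' ^ p) k) l x y * y k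
          = 2 * pdx (fun x' y' => A x' y' ^ p) l x y) ↔
        (pdx A l x y = 1 / (2 * A x y) *
          ((p - 1) * pdy A l x y * (∑ k, pdx A k x y * y k)
            + A x y * (∑ k, pdy (pdx A k) l x y * y k)))) := by
    intro l x hx y hy
    have hai : ∀ ι, DifferentiableAt ℝ (a ι) x := fun ι =>
      ((ha_smooth ι).differentiableOn (by simp)).differentiableAt (hU.mem_nhds hx)
    -- derivative of A in x
    have hAx : ∀ y' : Fin n → ℝ, HasFDerivAt (fun x' => A x' y')
        (∑ ι : Fin m → Fin n, (∏ j, y' (ι j)) • fderiv ℝ (a ι) x) x := by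
      intro y'
      have hsum : HasFDerivAt (fun x' => ∑ ι : Fin m → Fin n, a ι x' * ∏ j, y' (ι j))
          (∑ ι : Fin m → Fin n, (∏ j, y' (ι j)) • fderiv ℝ (a ι) x) x :=
        HasFDerivAt.fun_sum fun ι _ => ((hai ι).hasFDerivAt).mul_const _
      exact hsum.congr_of_eventuallyEq <|
        Filter.eventuallyEq_of_mem (hU.mem_nhds hx) fun x' hx' => hA x' hx' y'
    have hpdxA : ∀ (k : Fin n) (y' : Fin n → ℝ), pdx A k x y' =
        ∑ ι : Fin m → Fin n, fderiv ℝ (a ι) x (Pi.single k 1) * ∏ j, y' (ι j) := by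
      intro k y'
      simp only [pdx]
      rw [(hAx y').fderiv]
      simp [mul_comm]
    set g : Fin n → (Fin n → ℝ) → ℝ :=
      fun k y' => ∑ ι : Fin m → Fin n, fderiv ℝ (a ι) x (Pi.single k 1) * ∏ j, y' (ι j)
      with hgdef
    have hgdiff : ∀ k, DifferentiableAt ℝ (g k) y := fun k => polyDiffAt _ y
    have hAxy : A x = fun y' => ∑ ι : Fin m → Fin n, a ι x * ∏ j, y' (ι j) :=
      funext fun y' => hA x hx y'
    have hAydiff : DifferentiableAt ℝ (A x) y := by
      rw [hAxy]; exact polyDiffAt _ y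
    have ha0 : 0 < A x y := hApos x hx y hy
    -- pdx of A^p
    have hpdxF : ∀ (k : Fin n) (y' : Fin n → ℝ), y' ≠ 0 →
        pdx (fun x' y'' => A x' y'' ^ p) k x y' = p * A x y' ^ (p - 1) * pdx A k x y' := by
      intro k y' hy'
      have h1 : HasFDerivAt (fun x' => A x' y' ^ p)
          ((p * A x y' ^ (p - 1)) •
            (∑ ι : Fin m → Fin n, (∏ j, y' (ι j)) • fderiv ℝ (a ι) x)) x :=
        (hAx y').rpow_const (Or.inl (hApos x hx y' hy').ne')
      have h2 : pdx A k x y' =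
          (∑ ι : Fin m → Fin n, (∏ j, y' (ι j)) • fderiv ℝ (a ι) x) (Pi.single k 1) := by
        simp only [pdx]; rw [(hAx y').fderiv]
      simp only [pdx]
      rw [h1.fderiv, (hAx y').fderiv]
      rw [ContinuousLinearMap.smul_apply, smul_eq_mul, mul_assoc]
    -- second derivative in y
    have hM := hAydiff.hasFDerivAt
    have hpdy2 : ∀ k : Fin n,
        pdy (pdx (fun x' y'' => A x' y'' ^ p) k) l x y
          = p * (A x y ^ (p - 1) * pdy (pdx A k) l x y
              + pdx A k x y * ((p - 1) * A x y ^ (p - 1 - 1) * pdy A l x y)) := by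
      intro k
      have hg_eq : pdx A k x = g k := funext fun y' => hpdxA k y'
      have heq : (fun y' => pdx (fun x' y'' => A x' y'' ^ p) k x y')
          =ᶠ[nhds y] fun y' => p * (A x y' ^ (p - 1) * g k y') := by
        filter_upwards [IsOpen.mem_nhds isOpen_compl_singleton hy] with y' hy'
        rw [hpdxF k y' hy', hpdxA k y']
        simp only [hgdef]
        ring
      have hrpow : HasFDerivAt (fun y' => A x y' ^ (p - 1))
          (((p - 1) * A x y ^ (p - 1 - 1)) • fderiv ℝ (A x) y) y :=
        hM.rpow_const (Or.inl ha0.ne')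
      have hmul := (hrpow.mul (hgdiff k).hasFDerivAt).const_mul p
      have e1 : pdy (pdx A k) l x y = fderiv ℝ (g k) y (Pi.single l 1) := by
        simp only [pdy]; rw [hg_eq]
      calc pdy (pdx (fun x' y'' => A x' y'' ^ p) k) l x y
          = fderiv ℝ (fun y' => pdx (fun x' y'' => A x' y'' ^ p) k x y') y
              (Pi.single l 1) := rfl
        _ = fderiv ℝ (fun y' => p * (A x y' ^ (p - 1) * g k y')) y (Pi.single l 1) := by
            rw [heq.fderiv_eq]
        _ = (p • (A x y ^ (p - 1) • fderiv ℝ (g k) y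
              + g k y • (((p - 1) * A x y ^ (p - 1 - 1)) • fderiv ℝ (A x) y)))
              (Pi.single l 1) := by rw [← hmul.fderiv]; rfl
        _ = p * (A x y ^ (p - 1) * pdy (pdx A k) l x y
              + pdx A k x y * ((p - 1) * A x y ^ (p - 1 - 1) * pdy A l x y)) := by
            rw [e1, ← hg_eq]
            simp only [ContinuousLinearMap.smul_apply, ContinuousLinearMap.add_apply,
              smul_eq_mul, pdy]
    -- assemble
    have hb : (0 : ℝ) < A x y ^ (p - 1) := Real.rpow_pos_of_pos ha0 _
    have hc : A x y ^ (p - 1 - 1) = A x y ^ (p - 1) / A x y :=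
      Real.rpow_sub_one ha0.ne' (p - 1)
    have hsum : ∑ k, pdy (pdx (fun x' y' => A x' y' ^ p) k) l x y * y k
        = p * (A x y ^ (p - 1)) * (∑ k, pdy (pdx A k) l x y * y k)
          + p * (p - 1) * ((A x y ^ (p - 1)) / A x y) * pdy A l x y
            * (∑ k, pdx A k x y * y k) := by
      calc ∑ k, pdy (pdx (fun x' y' => A x' y' ^ p) k) l x y * y k
          = ∑ k, (p * (A x y ^ (p - 1)) * (pdy (pdx A k) l x y * y k)
              + p * (p - 1) * ((A x y ^ (p - 1)) / A x y) * pdy A l x y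
                * (pdx A k x y * y k)) := by
            refine Finset.sum_congr rfl fun k _ => ?_
            rw [hpdy2 k, hc]
            ring
        _ = _ := by
            rw [Finset.sum_add_distrib, ← Finset.mul_sum, ← Finset.mul_sum]
    rw [hsum, hpdxF l y hy]
    exact algIff p (A x y) (A x y ^ (p - 1)) (pdy A l x y)
      (∑ k, pdx A k x y * y k) (∑ k, pdy (pdx A k) l x y * y k)
      (pdx A l x y) hp ha0.ne' hb.ne'
  constructor
  · intro h l x hx y hy; exact (key l x hx y hy).mp (h l x hx y hy)
  · intro h l x hx y hy; exact (key l x hx y hy).mpr (h l x hx y hy)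
end

section
/- Let A ∈ ℝ[y¹,…,yⁿ] be an irreducible homogeneous polynomial of degree m ≥ 1, and let B ∈ ℝ[y¹,…,yⁿ] be a homogeneous polynomial of degree m + 1. If A divides (∂A/∂y^l) · B for every l = 1,…,n, then there exists a homogeneous polynomial θ of degree 1 (a linear form) such that B = θ · A. -/
open MvPolynomial Finsupp

private lemma coeff_pderiv_aux {n : ℕ} (i : Fin n) (A : MvPolynomial (Fin n) ℝ)
    (e : Fin n →₀ ℕ) :
    MvPolynomial.coeff e (MvPolynomial.pderiv i A)
      = (e i + 1) * MvPolynomial.coeff (e + Finsupp.single i 1) A := by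
  induction A using MvPolynomial.induction_on' with
  | monomial s a =>
    rw [pderiv_monomial, coeff_monomial, coeff_monomial]
    by_cases h : s = e + Finsupp.single i 1
    · have hs : s - Finsupp.single i 1 = e := by
        subst h; ext j; simp [Finsupp.single_apply]
      have hsi : s i = e i + 1 := by subst h; simp
      rw [if_pos hs, if_pos h, hsi]
      push_cast; ring
    · rw [if_neg h]
      by_cases h2 : s - Finsupp.single i 1 = e
      · have hsi : s i = 0 := by
          by_contra hsi
          apply h
          have h2' := DFunLike.congr_fun h2
          ext j
          have hj := h2' j
          simp only [Finsupp.coe_tsub, Pi.sub_apply] at hj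
          rcases eq_or_ne j i with rfl | hij
          · simp only [Finsupp.coe_add, Pi.add_apply, Finsupp.single_eq_same] at *
            omega
          · simp only [Finsupp.coe_add, Pi.add_apply,
              Finsupp.single_eq_of_ne' (Ne.symm hij)] at *
            omega
        rw [if_pos h2, hsi]
        simp
      · rw [if_neg h2]
        simp
  | add p q hp hq =>
    simp only [map_add, coeff_add, hp, hq]
    ring

/-- Let `A ∈ ℝ[y¹,…,yⁿ]` be an irreducible homogeneous polynomial of
degree `m ≥ 1` and `B` a homogeneous polynomial of degree `m + 1`.  If `A` divides
`(∂A/∂y^l) · B` for every `l`, then `B = θ · A` for some linear form `θ`. -/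
theorem irreducible_divides_pderiv_mul
    {n m : ℕ} (hm : 1 ≤ m)
    (A B : MvPolynomial (Fin n) ℝ)
    (hA_hom : A.IsHomogeneous m)
    (hA_irr : Irreducible A)
    (hB_hom : B.IsHomogeneous (m + 1))
    (hdvd : ∀ l : Fin n, A ∣ (MvPolynomial.pderiv l A) * B) :
    ∃ θ : MvPolynomial (Fin n) ℝ, θ.IsHomogeneous 1 ∧ B = θ * A := by
  have hA_ne : A ≠ 0 := hA_irr.ne_zero
  -- find a variable with nonzero partial derivative
  obtain ⟨d, hd⟩ := MvPolynomial.exists_coeff_ne_zero hA_ne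
  have hdeg : Finsupp.degree d = m := by
    rw [Finsupp.degree_eq_weight_one]; exact hA_hom hd
  have hdpos : ∃ i : Fin n, d i ≠ 0 := by
    by_contra h
    push_neg at h
    have h0 : d = 0 := Finsupp.ext fun j => h j
    rw [h0, map_zero] at hdeg
    omega
  obtain ⟨i, hi⟩ := hdpos
  have hrestore : (d - Finsupp.single i 1) + Finsupp.single i 1 = d := by
    ext j
    simp only [Finsupp.coe_add, Finsupp.coe_tsub, Pi.add_apply, Pi.sub_apply]
    rcases eq_or_ne j i with rfl | hij
    · rw [Finsupp.single_eq_same]; omega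
    · rw [Finsupp.single_eq_of_ne' (Ne.symm hij)]; omega
  -- pderiv i A is nonzero
  have hD_ne : MvPolynomial.pderiv i A ≠ 0 := by
    intro h0
    have hc := coeff_pderiv_aux i A (d - Finsupp.single i 1)
    rw [h0, MvPolynomial.coeff_zero, hrestore] at hc
    rcases mul_eq_zero.mp hc.symm with h | h
    · exact Nat.cast_add_one_ne_zero _ h
    · exact hd h
  -- pderiv i A is homogeneous of degree m - 1
  have hws : (Finsupp.weight (1 : Fin n → ℕ)) (Finsupp.single i 1) = 1 := by
    simp [Finsupp.weight_apply, Finsupp.sum_single_index]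
  have hD_hom : (MvPolynomial.pderiv i A).IsHomogeneous (m - 1) := by
    intro e he
    rw [coeff_pderiv_aux] at he
    have hce : MvPolynomial.coeff (e + Finsupp.single i 1) A ≠ 0 := by
      intro h0; rw [h0, mul_zero] at he; exact he rfl
    have h1 := hA_hom hce
    rw [map_add, hws] at h1
    omega
  -- A does not divide pderiv i A
  have hnotdvd : ¬ A ∣ MvPolynomial.pderiv i A := by
    rintro ⟨k, hk⟩
    apply hD_ne
    have hksum : ∑ j ∈ Finset.range (k.totalDegree + 1),
        MvPolynomial.homogeneousComponent j k = k :=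
      MvPolynomial.sum_homogeneousComponent k
    have hsplit : MvPolynomial.pderiv i A = ∑ j ∈ Finset.range (k.totalDegree + 1),
        A * MvPolynomial.homogeneousComponent j k := by
      rw [← Finset.mul_sum, hksum, hk]
    have hcomp : MvPolynomial.homogeneousComponent (m - 1) (MvPolynomial.pderiv i A)
        = MvPolynomial.pderiv i A := by
      rw [MvPolynomial.homogeneousComponent_of_mem hD_hom, if_pos rfl]
    rw [← hcomp, hsplit, map_sum]
    apply Finset.sum_eq_zero
    intro j _
    rw [MvPolynomial.homogeneousComponent_of_mem
      (hA_hom.mul (MvPolynomial.homogeneousComponent_isHomogeneous j k))]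
    rw [if_neg (by omega)]
  -- A is prime, hence divides B
  have hA_prime : Prime A := hA_irr.prime
  have hAB : A ∣ B := by
    rcases hA_prime.2.2 _ _ (hdvd i) with h | h
    · exact absurd h hnotdvd
    · exact h
  obtain ⟨θ, hθ⟩ := hAB
  by_cases hB0 : B = 0
  · exact ⟨0, MvPolynomial.isHomogeneous_zero _ _ 1, by rw [hB0, zero_mul]⟩
  have hθ_ne : θ ≠ 0 := by
    intro h0; rw [h0, mul_zero] at hθ; exact hB0 hθ
  set N := θ.totalDegree with hN
  have hθsum : ∑ j ∈ Finset.range (N + 1), MvPolynomial.homogeneousComponent j θ = θ :=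
    MvPolynomial.sum_homogeneousComponent θ
  have hkey : ∀ j, j ≠ 1 → MvPolynomial.homogeneousComponent j θ = 0 := by
    intro j hj
    by_cases hjN : N < j
    · exact MvPolynomial.homogeneousComponent_eq_zero j θ hjN
    push_neg at hjN
    have hBj : MvPolynomial.homogeneousComponent (m + j) B = 0 := by
      rw [MvPolynomial.homogeneousComponent_of_mem hB_hom, if_neg (by omega)]
    have hBsum : B = ∑ e ∈ Finset.range (N + 1),
        A * MvPolynomial.homogeneousComponent e θ := by
      rw [← Finset.mul_sum, hθsum, hθ]
    have hcomp : MvPolynomial.homogeneousComponent (m + j) B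
        = A * MvPolynomial.homogeneousComponent j θ := by
      rw [hBsum, map_sum]
      rw [Finset.sum_eq_single j]
      · exact (MvPolynomial.homogeneousComponent_of_mem
          (hA_hom.mul (MvPolynomial.homogeneousComponent_isHomogeneous j θ))).trans
          (if_pos rfl)
      · intro e _ he
        rw [MvPolynomial.homogeneousComponent_of_mem
          (hA_hom.mul (MvPolynomial.homogeneousComponent_isHomogeneous e θ))]
        rw [if_neg (by omega)]
      · intro hjmem
        exact absurd (Finset.mem_range.mpr (by omega)) hjmem
    rw [hBj] at hcomp
    rcases mul_eq_zero.mp hcomp.symm with h | h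
    · exact absurd h hA_ne
    · exact h
  have hθeq : θ = MvPolynomial.homogeneousComponent 1 θ := by
    rcases Nat.eq_zero_or_pos N with h0 | hpos
    · exfalso
      apply hθ_ne
      rw [← hθsum, h0]
      simp [hkey 0 (by omega)]
    · conv_lhs => rw [← hθsum]
      exact Finset.sum_eq_single 1 (fun e _ he => hkey e he)
        (fun h1 => absurd (Finset.mem_range.mpr (by omega)) h1)
  refine ⟨θ, ?_, by rw [hθ, mul_comm]⟩
  rw [hθeq]
  exact MvPolynomial.homogeneousComponent_isHomogeneous 1 θ
end

section
/- Let F = √A be a Riemannian metric on an open subset U ⊆ ℝⁿ, where A(x,y) = a_{ij}(x) y^i y^j with (a_{ij}(x)) smooth, symmetric, and positive definite, and suppose there is a 1-form θ = θ_l(x) y^l such that A_{x^l} = (1/3) ∂(θA)/∂y^l for all l. Then the spray coefficients of F are given by G^i = (1/12) θ^i F² + (1/6) θ y^i, where θ^i = 2 A^{ik} θ_k and (A^{ik}) is the inverse of the matrix (A_{ik}) = (∂²A/∂y^i∂y^k) = (2a_{ik}). -/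
open scoped BigOperators

section helpers
variable {n : ℕ}

noncomputable abbrev prj (i : Fin n) : (Fin n → ℝ) →L[ℝ] ℝ :=
  ContinuousLinearMap.proj (R := ℝ) (φ := fun _ : Fin n => ℝ) i

lemma hasFD_lin (c : Fin n → ℝ) (y : Fin n → ℝ) :
    HasFDerivAt (fun z : Fin n → ℝ => ∑ i, c i * z i) (∑ i, c i • prj i) y :=
  HasFDerivAt.fun_sum fun i _ => ((prj i).hasFDerivAt (x := y)).const_mul (c i)

lemma hasFD_quad (c : Fin n → Fin n → ℝ) (y : Fin n → ℝ) :
    HasFDerivAt (fun z : Fin n → ℝ => ∑ p, ∑ q, c p q * (z p * z q))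
      (∑ p, ∑ q, c p q • (y p • prj q + y q • prj p)) y :=
  HasFDerivAt.fun_sum fun p _ => HasFDerivAt.fun_sum fun q _ =>
    (((prj p).hasFDerivAt (x := y)).mul ((prj q).hasFDerivAt (x := y))).const_mul (c p q)

lemma linD_apply (c : Fin n → ℝ) (l : Fin n) :
    (∑ i, c i • prj i) (Pi.single l 1) = c l := by
  simp [ContinuousLinearMap.sum_apply, Pi.single_apply]

lemma quadD_apply (c : Fin n → Fin n → ℝ) (y : Fin n → ℝ) (l : Fin n) :
    (∑ p, ∑ q, c p q • (y p • prj q + y q • prj p)) (Pi.single l 1)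
      = (∑ q, c l q * y q) + ∑ p, c p l * y p := by
  simp only [ContinuousLinearMap.sum_apply, ContinuousLinearMap.smul_apply,
    ContinuousLinearMap.add_apply, ContinuousLinearMap.proj_apply, Pi.single_apply,
    smul_eq_mul, mul_ite, mul_one, mul_zero, mul_add, Finset.sum_add_distrib]
  rw [add_comm]
  congr 1
  · simp [Finset.sum_ite_eq, mul_comm]
  · rw [Finset.sum_comm]
    simp [Finset.sum_ite_eq, mul_comm]

lemma pd_lin (c : Fin n → ℝ) (y : Fin n → ℝ) (l : Fin n) :
    fderiv ℝ (fun z : Fin n → ℝ => ∑ i, c i * z i) y (Pi.single l 1) = c l := by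
  rw [(hasFD_lin c y).fderiv, linD_apply]

lemma pd_quad (c : Fin n → Fin n → ℝ) (y : Fin n → ℝ) (l : Fin n) :
    fderiv ℝ (fun z : Fin n → ℝ => ∑ p, ∑ q, c p q * (z p * z q)) y (Pi.single l 1)
      = (∑ q, c l q * y q) + ∑ p, c p l * y p := by
  rw [(hasFD_quad c y).fderiv, quadD_apply]

lemma pd_cubic (c : Fin n → ℝ) (d : Fin n → Fin n → ℝ) (y : Fin n → ℝ) (l : Fin n) :
    fderiv ℝ (fun z : Fin n → ℝ => (∑ k, c k * z k) * ∑ p, ∑ q, d p q * (z p * z q)) y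
        (Pi.single l 1)
      = c l * (∑ p, ∑ q, d p q * (y p * y q))
        + (∑ k, c k * y k) * ((∑ q, d l q * y q) + ∑ p, d p l * y p) := by
  rw [((hasFD_lin c y).fun_mul (hasFD_quad d y)).fderiv]
  simp only [ContinuousLinearMap.add_apply, ContinuousLinearMap.smul_apply, smul_eq_mul,
    linD_apply, quadD_apply]
  ring

lemma msum1 (C : ℝ) (f g : Fin n → ℝ) :
    ∑ p, ∑ q, C * (f p * g q) = C * ((∑ p, f p) * (∑ q, g q)) := by
  rw [Finset.sum_mul_sum, Finset.mul_sum]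
  exact Finset.sum_congr rfl fun p _ => by rw [Finset.mul_sum]

lemma msum2 (C : ℝ) (d : Fin n → Fin n → ℝ) :
    ∑ p, ∑ q, C * d p q = C * ∑ p, ∑ q, d p q := by
  simp [Finset.mul_sum]

end helpers

/-- Let `F = √A` be a locally dually flat Riemannian metric with
`A_{x^l} = (1/3) ∂(θA)/∂y^l`.  Then the spray coefficients of `F` are
`G^i = (1/12) θ^i F² + (1/6) θ y^i`, where `θ^i = 2 A^{ik} θ_k` and `(A^{ik})` is the
inverse of `(A_{ik}) = (2 a_{ik})`. -/
theorem spray_coefficients_dually_flat_riemannian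
    {n : ℕ}
    (U : Set (Fin n → ℝ)) (hU : IsOpen U)
    (a : Fin n → Fin n → (Fin n → ℝ) → ℝ)
    (ha_smooth : ∀ i j, ContDiffOn ℝ (⊤ : ℕ∞) (a i j) U)
    (ha_symm : ∀ i j, a i j = a j i)
    (ha_posdef : ∀ x ∈ U, ∀ y : Fin n → ℝ, y ≠ 0 → 0 < ∑ i, ∑ j, a i j x * y i * y j)
    (A : (Fin n → ℝ) → (Fin n → ℝ) → ℝ)
    (hA : ∀ x ∈ U, ∀ y : Fin n → ℝ, A x y = ∑ i, ∑ j, a i j x * y i * y j)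
    (θ : Fin n → (Fin n → ℝ) → ℝ)
    (hθ_smooth : ∀ l, ContDiffOn ℝ (⊤ : ℕ∞) (θ l) U)
    -- A_{x^l} = (1/3) ∂(θA)/∂y^l
    (hkey : ∀ l : Fin n, ∀ x ∈ U, ∀ y : Fin n → ℝ,
      pdx A l x y = (1 / 3) * pdy (fun x' y' => (∑ k, θ k x' * y' k) * A x' y') l x y)
    -- (g^{ij}) : the inverse of the fundamental tensor g_{ij} = (1/2) ∂²(F²)/∂y^i∂y^j
    (ginv : (Fin n → ℝ) → (Fin n → ℝ) → Matrix (Fin n) (Fin n) ℝ)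
    (hginv : ∀ x ∈ U, ∀ y : Fin n → ℝ, y ≠ 0 →
      (Matrix.of fun i j => (1 / 2) * pdy (pdy A j) i x y) * ginv x y = 1 ∧
      ginv x y * (Matrix.of fun i j => (1 / 2) * pdy (pdy A j) i x y) = 1)
    -- (A^{ik}) : the inverse of (A_{ik}) = (2 a_{ik})
    (Ainv : (Fin n → ℝ) → Matrix (Fin n) (Fin n) ℝ)
    (hAinv : ∀ x ∈ U,
      (Matrix.of fun i k => 2 * a i k x) * Ainv x = 1 ∧
      Ainv x * (Matrix.of fun i k => 2 * a i k x) = 1) :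
    -- G^i = (1/12) θ^i F² + (1/6) θ y^i with θ^i = 2 A^{ik} θ_k
    ∀ x ∈ U, ∀ y : Fin n → ℝ, y ≠ 0 → ∀ i : Fin n,
      (1 / 4) * ∑ l, ginv x y i l *
          ((∑ k, pdy (pdx A k) l x y * y k) - pdx A l x y)
        = (1 / 12) * (2 * ∑ k, Ainv x i k * θ k x) * A x y
          + (1 / 6) * (∑ k, θ k x * y k) * y i := by
  intro x hx y hy i
  have hsymx : ∀ p q, a p q x = a q p x := fun p q => congrFun (ha_symm p q) x
  have hAx : A x = fun z => ∑ p, ∑ q, a p q x * (z p * z q) := by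
    funext z
    rw [hA x hx z]
    exact Finset.sum_congr rfl fun p _ => Finset.sum_congr rfl fun q _ => by ring
  have hpdyA : ∀ (j : Fin n) (z : Fin n → ℝ),
      pdy A j x z = (∑ q, a j q x * z q) + ∑ p, a p j x * z p := by
    intro j z
    show fderiv ℝ (A x) z (Pi.single j 1) = _
    rw [hAx]
    exact pd_quad _ z j
  have hpdy2 : ∀ i' j : Fin n, pdy (pdy A j) i' x y = 2 * a i' j x := by
    intro i' j
    show fderiv ℝ (pdy A j x) y (Pi.single i' 1) = _
    have hfun : pdy A j x = fun z => ∑ p, (a j p x + a p j x) * z p := by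
      funext z
      rw [hpdyA j z, ← Finset.sum_add_distrib]
      exact Finset.sum_congr rfl fun p _ => by ring
    rw [hfun, pd_lin, hsymx j i']
    ring
  -- the fundamental tensor is (a i j x)
  have hM : (Matrix.of fun i' j => (1 / 2) * pdy (pdy A j) i' x y)
      = Matrix.of (fun i' j => a i' j x) := by
    ext i' j
    simp only [Matrix.of_apply]
    rw [hpdy2 i' j]
    ring
  obtain ⟨hg1, hg2⟩ := hginv x hx y hy
  rw [hM] at hg1 hg2
  have R1 : ∀ p : Fin n, (∑ l, ginv x y i l * a l p x) = if i = p then 1 else 0 := by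
    intro p
    have h := hg2
    have h2 : (ginv x y * Matrix.of fun i' j => a i' j x) i p
        = (1 : Matrix (Fin n) (Fin n) ℝ) i p := by rw [h]
    simpa [Matrix.mul_apply, Matrix.one_apply] using h2
  have hgA : ginv x y = (2 : ℝ) • Ainv x := by
    obtain ⟨hA1, hA2⟩ := hAinv x hx
    have h2M : (Matrix.of fun i' k => 2 * a i' k x)
        = (2 : ℝ) • Matrix.of (fun i' k => a i' k x) := by
      ext i' k
      simp [Matrix.smul_apply]
    rw [h2M] at hA1 hA2
    calc ginv x y = 1 * ginv x y := (one_mul _).symm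
      _ = (Ainv x * ((2:ℝ) • Matrix.of fun i' k => a i' k x)) * ginv x y := by rw [hA2]
      _ = Ainv x * (((2:ℝ) • Matrix.of fun i' k => a i' k x) * ginv x y) := by
          rw [Matrix.mul_assoc]
      _ = Ainv x * ((2:ℝ) • ((Matrix.of fun i' k => a i' k x) * ginv x y)) := by
          rw [Matrix.smul_mul]
      _ = Ainv x * ((2:ℝ) • (1 : Matrix (Fin n) (Fin n) ℝ)) := by rw [hg1]
      _ = (2:ℝ) • (Ainv x * 1) := by rw [Matrix.mul_smul]
      _ = (2:ℝ) • Ainv x := by rw [Matrix.mul_one]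
  have hgAe : ∀ l, ginv x y i l = 2 * Ainv x i l := by
    intro l
    rw [hgA]
    simp [Matrix.smul_apply]
  -- derivative of the cubic θ·A in y
  have hcu : ∀ (l : Fin n) (z : Fin n → ℝ),
      pdy (fun x' y' => (∑ k, θ k x' * y' k) * A x' y') l x z
        = θ l x * (∑ p, ∑ q, a p q x * (z p * z q))
          + (∑ k, θ k x * z k) * ((∑ q, a l q x * z q) + ∑ p, a p l x * z p) := by
    intro l z
    show fderiv ℝ (fun y' => (∑ k, θ k x * y' k) * A x y') z (Pi.single l 1) = _
    have hfun : (fun y' : Fin n → ℝ => (∑ k, θ k x * y' k) * A x y')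
        = fun y' => (∑ k, θ k x * y' k) * ∑ p, ∑ q, a p q x * (y' p * y' q) := by
      funext z'
      rw [hA x hx z']
      simp only [mul_assoc]
    rw [hfun]
    exact pd_cubic _ _ z l
  -- pdx A is an explicit quadratic in y
  have hpdxA : ∀ (k : Fin n) (z : Fin n → ℝ), pdx A k x z
      = ∑ p, ∑ q, ((1/3) * (θ k x * a p q x + θ p x * (a k q x + a q k x))) * (z p * z q) := by
    intro k z
    rw [hkey k x hx z, hcu k z]
    symm
    calc ∑ p, ∑ q, ((1/3) * (θ k x * a p q x + θ p x * (a k q x + a q k x))) * (z p * z q)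
        = ∑ p, ∑ q, (((1/3) * θ k x) * (a p q x * (z p * z q))
            + ((1/3) * ((θ p x * z p) * (a k q x * z q))
            + (1/3) * ((θ p x * z p) * (a q k x * z q)))) :=
          Finset.sum_congr rfl fun p _ => Finset.sum_congr rfl fun q _ => by ring
      _ = (∑ p, ∑ q, ((1/3) * θ k x) * (a p q x * (z p * z q)))
          + ((∑ p, ∑ q, (1/3) * ((θ p x * z p) * (a k q x * z q)))
          + (∑ p, ∑ q, (1/3) * ((θ p x * z p) * (a q k x * z q)))) := by
          simp only [Finset.sum_add_distrib]
      _ = ((1/3) * θ k x) * (∑ p, ∑ q, a p q x * (z p * z q))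
          + ((1/3) * ((∑ p, θ p x * z p) * (∑ q, a k q x * z q))
          + (1/3) * ((∑ p, θ p x * z p) * (∑ q, a q k x * z q))) := by
          rw [msum2 ((1/3) * θ k x) (fun p q => a p q x * (z p * z q)),
            msum1 (1/3) (fun p => θ p x * z p) (fun q => a k q x * z q),
            msum1 (1/3) (fun p => θ p x * z p) (fun q => a q k x * z q)]
      _ = (1/3) * (θ k x * (∑ p, ∑ q, a p q x * (z p * z q))
            + (∑ k', θ k' x * z k') * ((∑ q, a k q x * z q) + ∑ p, a p k x * z p)) := by
          rw [show (∑ q, a q k x * z q) = ∑ p, a p k x * z p from rfl]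
          ring
  have hpdypdx : ∀ k l : Fin n, pdy (pdx A k) l x y
      = (∑ q, ((1/3) * (θ k x * a l q x + θ l x * (a k q x + a q k x))) * y q)
        + ∑ p, ((1/3) * (θ k x * a p l x + θ p x * (a k l x + a l k x))) * y p := by
    intro k l
    show fderiv ℝ (pdx A k x) y (Pi.single l 1) = _
    have hfun : pdx A k x
        = fun z => ∑ p, ∑ q, ((1/3) * (θ k x * a p q x + θ p x * (a k q x + a q k x))) * (z p * z q) :=
      funext (hpdxA k)
    rw [hfun]
    exact pd_quad _ y l
  have hQswap : ∑ k : Fin n, ∑ q : Fin n, a q k x * (y q * y k)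
      = ∑ p, ∑ q, a p q x * (y p * y q) := Finset.sum_comm
  -- the bracket
  have key : ∀ l : Fin n, (∑ k, pdy (pdx A k) l x y * y k) - pdx A l x y
      = (1/3) * (θ l x * (∑ p, ∑ q, a p q x * (y p * y q))
          + (∑ k, θ k x * y k) * ((∑ q, a l q x * y q) + ∑ p, a p l x * y p)) := by
    intro l
    have hstep : ∑ k, pdy (pdx A k) l x y * y k
        = ∑ k, ((∑ q, ((1/3) * (θ k x * a l q x + θ l x * (a k q x + a q k x))) * y q)
            + ∑ p, ((1/3) * (θ k x * a p l x + θ p x * (a k l x + a l k x))) * y p) * y k :=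
      Finset.sum_congr rfl fun k _ => by rw [hpdypdx k l]
    rw [hstep, hpdxA l y]
    have E1 : ∑ k, (∑ q, ((1/3) * (θ k x * a l q x + θ l x * (a k q x + a q k x))) * y q) * y k
        = (1/3) * ((∑ k, θ k x * y k) * (∑ q, a l q x * y q))
          + (((1/3) * θ l x) * (∑ p, ∑ q, a p q x * (y p * y q))
          + ((1/3) * θ l x) * (∑ p, ∑ q, a p q x * (y p * y q))) := by
      calc ∑ k, (∑ q, ((1/3) * (θ k x * a l q x + θ l x * (a k q x + a q k x))) * y q) * y k
          = ∑ k, ∑ q, ((1/3) * ((θ k x * y k) * (a l q x * y q))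
              + (((1/3) * θ l x) * (a k q x * (y k * y q))
              + ((1/3) * θ l x) * (a q k x * (y q * y k)))) := by
            refine Finset.sum_congr rfl fun k _ => ?_
            rw [Finset.sum_mul]
            exact Finset.sum_congr rfl fun q _ => by ring
        _ = (∑ k, ∑ q, (1/3) * ((θ k x * y k) * (a l q x * y q)))
            + ((∑ k, ∑ q, ((1/3) * θ l x) * (a k q x * (y k * y q)))
            + (∑ k, ∑ q, ((1/3) * θ l x) * (a q k x * (y q * y k)))) := by
            simp only [Finset.sum_add_distrib]
        _ = (1/3) * ((∑ k, θ k x * y k) * (∑ q, a l q x * y q))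
            + (((1/3) * θ l x) * (∑ p, ∑ q, a p q x * (y p * y q))
            + ((1/3) * θ l x) * (∑ p, ∑ q, a p q x * (y p * y q))) := by
            rw [msum1 (1/3) (fun k => θ k x * y k) (fun q => a l q x * y q),
              msum2 ((1/3) * θ l x) (fun k q => a k q x * (y k * y q)),
              msum2 ((1/3) * θ l x) (fun k q => a q k x * (y q * y k)), hQswap]
    have E2 : ∑ k, (∑ p, ((1/3) * (θ k x * a p l x + θ p x * (a k l x + a l k x))) * y p) * y k
        = (1/3) * ((∑ k, θ k x * y k) * (∑ p, a p l x * y p))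
          + ((1/3) * ((∑ k, a k l x * y k) * (∑ p, θ p x * y p))
          + (1/3) * ((∑ k, a l k x * y k) * (∑ p, θ p x * y p))) := by
      calc ∑ k, (∑ p, ((1/3) * (θ k x * a p l x + θ p x * (a k l x + a l k x))) * y p) * y k
          = ∑ k, ∑ p, ((1/3) * ((θ k x * y k) * (a p l x * y p))
              + ((1/3) * ((a k l x * y k) * (θ p x * y p))
              + (1/3) * ((a l k x * y k) * (θ p x * y p)))) := by
            refine Finset.sum_congr rfl fun k _ => ?_
            rw [Finset.sum_mul]
            exact Finset.sum_congr rfl fun p _ => by ring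
        _ = (∑ k, ∑ p, (1/3) * ((θ k x * y k) * (a p l x * y p)))
            + ((∑ k, ∑ p, (1/3) * ((a k l x * y k) * (θ p x * y p)))
            + (∑ k, ∑ p, (1/3) * ((a l k x * y k) * (θ p x * y p)))) := by
            simp only [Finset.sum_add_distrib]
        _ = _ := by
            rw [msum1 (1/3) (fun k => θ k x * y k) (fun p => a p l x * y p),
              msum1 (1/3) (fun k => a k l x * y k) (fun p => θ p x * y p),
              msum1 (1/3) (fun k => a l k x * y k) (fun p => θ p x * y p)]
    have E3 : ∑ p, ∑ q, ((1/3) * (θ l x * a p q x + θ p x * (a l q x + a q l x))) * (y p * y q)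
        = ((1/3) * θ l x) * (∑ p, ∑ q, a p q x * (y p * y q))
          + ((1/3) * ((∑ p, θ p x * y p) * (∑ q, a l q x * y q))
          + (1/3) * ((∑ p, θ p x * y p) * (∑ q, a q l x * y q))) := by
      calc ∑ p, ∑ q, ((1/3) * (θ l x * a p q x + θ p x * (a l q x + a q l x))) * (y p * y q)
          = ∑ p, ∑ q, (((1/3) * θ l x) * (a p q x * (y p * y q))
              + ((1/3) * ((θ p x * y p) * (a l q x * y q))
              + (1/3) * ((θ p x * y p) * (a q l x * y q)))) :=
            Finset.sum_congr rfl fun p _ => Finset.sum_congr rfl fun q _ => by ring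
        _ = (∑ p, ∑ q, ((1/3) * θ l x) * (a p q x * (y p * y q)))
            + ((∑ p, ∑ q, (1/3) * ((θ p x * y p) * (a l q x * y q)))
            + (∑ p, ∑ q, (1/3) * ((θ p x * y p) * (a q l x * y q)))) := by
            simp only [Finset.sum_add_distrib]
        _ = _ := by
            rw [msum2 ((1/3) * θ l x) (fun p q => a p q x * (y p * y q)),
              msum1 (1/3) (fun p => θ p x * y p) (fun q => a l q x * y q),
              msum1 (1/3) (fun p => θ p x * y p) (fun q => a q l x * y q)]
    rw [show ∑ k, ((∑ q, ((1/3) * (θ k x * a l q x + θ l x * (a k q x + a q k x))) * y q)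
          + ∑ p, ((1/3) * (θ k x * a p l x + θ p x * (a k l x + a l k x))) * y p) * y k
        = (∑ k, (∑ q, ((1/3) * (θ k x * a l q x + θ l x * (a k q x + a q k x))) * y q) * y k)
          + ∑ k, (∑ p, ((1/3) * (θ k x * a p l x + θ p x * (a k l x + a l k x))) * y p) * y k by
        rw [← Finset.sum_add_distrib]
        exact Finset.sum_congr rfl fun k _ => by ring]
    rw [E1, E2, E3]
    ring
  -- assemble
  rw [show ∑ l, ginv x y i l * ((∑ k, pdy (pdx A k) l x y * y k) - pdx A l x y)
      = ∑ l, ginv x y i l * ((1/3) * (θ l x * (∑ p, ∑ q, a p q x * (y p * y q))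
          + (∑ k, θ k x * y k) * ((∑ q, a l q x * y q) + ∑ p, a p l x * y p))) from
    Finset.sum_congr rfl fun l _ => by rw [key l]]
  have hU : ∑ l, ginv x y i l * (∑ q, a l q x * y q) = y i := by
    calc ∑ l, ginv x y i l * (∑ q, a l q x * y q)
        = ∑ l, ∑ q, (ginv x y i l * a l q x) * y q := by
          refine Finset.sum_congr rfl fun l _ => ?_
          rw [Finset.mul_sum]
          exact Finset.sum_congr rfl fun q _ => by ring
      _ = ∑ q : Fin n, ∑ l : Fin n, (ginv x y i l * a l q x) * y q := Finset.sum_comm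
      _ = ∑ q, (∑ l, ginv x y i l * a l q x) * y q :=
          Finset.sum_congr rfl fun q _ => by rw [Finset.sum_mul]
      _ = ∑ q, (if i = q then 1 else 0) * y q :=
          Finset.sum_congr rfl fun q _ => by rw [R1 q]
      _ = y i := by simp [ite_mul, Finset.sum_ite_eq]
  have hV : ∑ l, ginv x y i l * (∑ p, a p l x * y p) = y i := by
    have hflip : ∀ l, (∑ p, a p l x * y p) = ∑ q, a l q x * y q := fun l =>
      Finset.sum_congr rfl fun p _ => by rw [hsymx p l]
    calc ∑ l, ginv x y i l * (∑ p, a p l x * y p)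
        = ∑ l, ginv x y i l * (∑ q, a l q x * y q) :=
          Finset.sum_congr rfl fun l _ => by rw [hflip l]
      _ = y i := hU
  have hθsum : ∑ l, ginv x y i l * θ l x = 2 * ∑ k, Ainv x i k * θ k x := by
    rw [Finset.mul_sum]
    exact Finset.sum_congr rfl fun l _ => by rw [hgAe l]; ring
  have hsplit : ∑ l, ginv x y i l * ((1/3) * (θ l x * (∑ p, ∑ q, a p q x * (y p * y q))
          + (∑ k, θ k x * y k) * ((∑ q, a l q x * y q) + ∑ p, a p l x * y p)))
      = (1/3) * ((∑ p, ∑ q, a p q x * (y p * y q)) * (∑ l, ginv x y i l * θ l x))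
        + ((1/3) * ((∑ k, θ k x * y k) * (∑ l, ginv x y i l * (∑ q, a l q x * y q)))
        + (1/3) * ((∑ k, θ k x * y k) * (∑ l, ginv x y i l * (∑ p, a p l x * y p)))) := by
    calc ∑ l, ginv x y i l * ((1/3) * (θ l x * (∑ p, ∑ q, a p q x * (y p * y q))
            + (∑ k, θ k x * y k) * ((∑ q, a l q x * y q) + ∑ p, a p l x * y p)))
        = ∑ l, ((1/3) * ((∑ p, ∑ q, a p q x * (y p * y q)) * (ginv x y i l * θ l x))
            + ((1/3) * ((∑ k, θ k x * y k) * (ginv x y i l * (∑ q, a l q x * y q)))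
            + (1/3) * ((∑ k, θ k x * y k) * (ginv x y i l * (∑ p, a p l x * y p))))) :=
          Finset.sum_congr rfl fun l _ => by ring
      _ = _ := by
          simp only [Finset.sum_add_distrib, Finset.mul_sum]
  rw [hsplit, hU, hV, hθsum, hA x hx y]
  rw [show ∑ i', ∑ j, a i' j x * y i' * y j = ∑ p, ∑ q, a p q x * (y p * y q) from
    Finset.sum_congr rfl fun p _ => Finset.sum_congr rfl fun q _ => by ring]
  ring
end

section
/- Let F = A^{1/m} be an m-th root Finsler metric on an open subset U ⊆ ℝⁿ whose Hessian matrix (A_{ij}) = (∂²A/∂y^i∂y^j) is invertible with inverse (A^{ij}). Then the spray coefficients of F, defined by G^i = (1/4) g^{il} { (∂²F²/∂x^k∂y^l) y^k − ∂F²/∂x^l }, are given by G^i = (1/2)(A_{0j} − A_{x^j}) A^{ij}, where A_0 = A_{x^k} y^k and A_{0j} = (∂²A/∂x^k∂y^j) y^k. -/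
open scoped BigOperators

noncomputable def Qp {n m : ℕ} (c : (Fin m → Fin n) → ℝ) : (Fin n → ℝ) → ℝ :=
  fun y => ∑ ι : Fin m → Fin n, c ι * ∏ k, y (ι k)

lemma Qp_contDiff {n m : ℕ} (c : (Fin m → Fin n) → ℝ) : ContDiff ℝ (⊤ : ℕ∞) (Qp c) := by
  apply ContDiff.sum
  intro ι _
  exact contDiff_const.mul (contDiff_prod fun k _ => contDiff_apply ℝ ℝ (ι k))

lemma Qp_homog {n m : ℕ} (c : (Fin m → Fin n) → ℝ) (t : ℝ) (y : Fin n → ℝ) :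
    Qp c (t • y) = t ^ m * Qp c y := by
  unfold Qp
  rw [Finset.mul_sum]
  refine Finset.sum_congr rfl fun ι _ => ?_
  have : ∏ k, (t • y) (ι k) = t ^ m * ∏ k, y (ι k) := by
    simp only [Pi.smul_apply, smul_eq_mul, Finset.prod_mul_distrib, Finset.prod_const,
      Finset.card_univ, Fintype.card_fin]
  rw [this]; ring

lemma euler_dir {E : Type*} [NormedAddCommGroup E] [NormedSpace ℝ E]
    {d : ℕ} {h : E → ℝ} {y : E} (hdiff : DifferentiableAt ℝ h y)
    (hhom : ∀ t : ℝ, 0 < t → h (t • y) = t ^ d * h y) :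
    fderiv ℝ h y y = d * h y := by
  have hφ : HasDerivAt (fun t : ℝ => t • y) ((1:ℝ) • y) 1 := (hasDerivAt_id 1).smul_const y
  have H1 : HasDerivAt (fun t : ℝ => h (t • y)) (fderiv ℝ h y y) 1 := by
    have h1 : HasFDerivAt h (fderiv ℝ h y) ((1:ℝ) • y) := by
      rw [one_smul]; exact hdiff.hasFDerivAt
    have := h1.comp_hasDerivAt 1 hφ
    rw [one_smul] at this; exact this
  have heq : (fun t : ℝ => h (t • y)) =ᶠ[nhds 1] fun t => t ^ d * h y := by
    filter_upwards [IsOpen.mem_nhds isOpen_Ioi (by norm_num : (1:ℝ) ∈ Set.Ioi 0)] with t ht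
    exact hhom t ht
  have H2 : HasDerivAt (fun t : ℝ => t ^ d * h y) (fderiv ℝ h y y) 1 :=
    H1.congr_of_eventuallyEq heq.symm
  have H3 : HasDerivAt (fun t : ℝ => t ^ d * h y) ((d * 1 ^ (d - 1)) * h y) 1 :=
    (hasDerivAt_pow d 1).mul_const (h y)
  have := H2.unique H3
  simpa using this

lemma fderiv_expand {n : ℕ} {h : (Fin n → ℝ) → ℝ} {y : Fin n → ℝ} :
    fderiv ℝ h y y = ∑ i, y i * fderiv ℝ h y (Pi.single i 1) := by
  have hy : y = ∑ i, y i • (Pi.single i (1:ℝ) : Fin n → ℝ) := by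
    funext j
    simp [Finset.sum_apply, Pi.single_apply, mul_comm]
  have : fderiv ℝ h y y = fderiv ℝ h y (∑ i, y i • (Pi.single i (1:ℝ) : Fin n → ℝ)) := by
    rw [← hy]
  rw [this, map_sum]
  refine Finset.sum_congr rfl fun i _ => ?_
  rw [(fderiv ℝ h y).map_smul, smul_eq_mul]

lemma euler_sum {n : ℕ} {d : ℕ} {h : (Fin n → ℝ) → ℝ} {y : Fin n → ℝ}
    (hdiff : DifferentiableAt ℝ h y)
    (hhom : ∀ t : ℝ, 0 < t → h (t • y) = t ^ d * h y) :
    ∑ i, y i * fderiv ℝ h y (Pi.single i 1) = d * h y := by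
  rw [← fderiv_expand, euler_dir hdiff hhom]

lemma fderiv_homog {n m : ℕ} (hm : 1 ≤ m) {f : (Fin n → ℝ) → ℝ} (hf : Differentiable ℝ f)
    (hhom : ∀ (t : ℝ) (y : Fin n → ℝ), f (t • y) = t ^ m * f y)
    {t : ℝ} (ht : 0 < t) (y v : Fin n → ℝ) :
    fderiv ℝ f (t • y) v = t ^ (m - 1) * fderiv ℝ f y v := by
  have hsm : HasFDerivAt (fun y' : Fin n → ℝ => t • y')
      (t • (ContinuousLinearMap.id ℝ (Fin n → ℝ))) y :=
    (ContinuousLinearMap.id ℝ (Fin n → ℝ)).hasFDerivAt.const_smul t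
  have H1 : HasFDerivAt (fun y' => f (t • y'))
      ((fderiv ℝ f (t • y)).comp (t • (ContinuousLinearMap.id ℝ (Fin n → ℝ)))) y :=
    (hf (t • y)).hasFDerivAt.comp y hsm
  have H2 : HasFDerivAt (fun y' => f (t • y')) (t ^ m • fderiv ℝ f y) y := by
    have : (fun y' : Fin n → ℝ => f (t • y')) = fun y' => t ^ m * f y' := by
      funext y'; exact hhom t y'
    rw [this]
    simpa [smul_eq_mul] using (hf y).hasFDerivAt.const_mul (t ^ m)
  have := H1.unique H2
  have happ := congrArg (fun (L : (Fin n → ℝ) →L[ℝ] ℝ) => L v) this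
  simp only [ContinuousLinearMap.comp_apply, ContinuousLinearMap.smul_apply,
    ContinuousLinearMap.id_apply, map_smul, smul_eq_mul] at happ
  have htm : t ^ m = t * t ^ (m - 1) := by
    rw [← pow_succ', Nat.sub_add_cancel hm]
  rw [htm] at happ
  exact mul_left_cancel₀ (ne_of_gt ht)
    (by linarith [happ] : t * fderiv ℝ f (t • y) v = t * (t ^ (m-1) * fderiv ℝ f y v))

lemma fderiv_rpow_apply {n : ℕ} {f : (Fin n → ℝ) → ℝ} {y : Fin n → ℝ}
    (hf : DifferentiableAt ℝ f y) (hfy : f y ≠ 0) (p : ℝ) (v : Fin n → ℝ) :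
    fderiv ℝ (fun y' => f y' ^ p) y v = p * f y ^ (p - 1) * fderiv ℝ f y v := by
  rw [(hf.hasFDerivAt.rpow_const (Or.inl hfy)).fderiv]
  simp [mul_assoc]

lemma fderiv_rpow_mul {n : ℕ} {f u : (Fin n → ℝ) → ℝ} {y : Fin n → ℝ}
    (hf : DifferentiableAt ℝ f y) (hu : DifferentiableAt ℝ u y)
    (hfy : f y ≠ 0) (p : ℝ) (v : Fin n → ℝ) :
    fderiv ℝ (fun y' => p * f y' ^ (p - 1) * u y') y v
      = p * (p - 1) * f y ^ (p - 2) * fderiv ℝ f y v * u y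
        + p * f y ^ (p - 1) * fderiv ℝ u y v := by
  have Hc : HasFDerivAt (fun y' => p * f y' ^ (p - 1))
      (p • (((p - 1) * f y ^ (p - 1 - 1)) • fderiv ℝ f y)) y :=
    (hf.hasFDerivAt.rpow_const (Or.inl hfy)).const_mul p
  have Hm := Hc.mul hu.hasFDerivAt
  rw [show (fun y' => p * f y' ^ (p - 1) * u y') = (fun y' => p * f y' ^ (p - 1)) * u from rfl,
    Hm.fderiv]
  have : p - 1 - 1 = p - 2 := by ring
  rw [this]
  simp only [ContinuousLinearMap.add_apply, ContinuousLinearMap.smul_apply, smul_eq_mul]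
  ring
/-- For an `m`-th root Finsler metric `F = A^{1/m}` with invertible
Hessian `(A_{ij})`, the spray coefficients
`G^i = (1/4) g^{il} { (∂²F²/∂x^k∂y^l) y^k − ∂F²/∂x^l }` are given by
`G^i = (1/2)(A_{0j} − A_{x^j}) A^{ij}`. -/
theorem spray_coefficients_mth_root
    {n m : ℕ} (hm : 2 ≤ m)
    (U : Set (Fin n → ℝ)) (hU : IsOpen U)
    (a : (Fin m → Fin n) → (Fin n → ℝ) → ℝ)
    (ha_smooth : ∀ ι, ContDiffOn ℝ (⊤ : ℕ∞) (a ι) U)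
    (ha_symm : ∀ (ι : Fin m → Fin n) (σ : Equiv.Perm (Fin m)), a (ι ∘ σ) = a ι)
    (A : (Fin n → ℝ) → (Fin n → ℝ) → ℝ)
    (hA : ∀ x ∈ U, ∀ y : Fin n → ℝ, A x y = ∑ ι : Fin m → Fin n, a ι x * ∏ k, y (ι k))
    (hApos : ∀ x ∈ U, ∀ y : Fin n → ℝ, y ≠ 0 → 0 < A x y)
    -- (A^{ij}) : the inverse of the Hessian (A_{ij}) = (∂²A/∂y^i∂y^j)
    (Ainv : (Fin n → ℝ) → (Fin n → ℝ) → Matrix (Fin n) (Fin n) ℝ)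
    (hAinv : ∀ x ∈ U, ∀ y : Fin n → ℝ, y ≠ 0 →
      (Matrix.of fun i j => pdy (pdy A j) i x y) * Ainv x y = 1 ∧
      Ainv x y * (Matrix.of fun i j => pdy (pdy A j) i x y) = 1)
    -- (g^{il}) : the inverse of the fundamental tensor g_{il} = (1/2) ∂²(F²)/∂y^i∂y^l,
    -- F² = A^{2/m}
    (ginv : (Fin n → ℝ) → (Fin n → ℝ) → Matrix (Fin n) (Fin n) ℝ)
    (hginv : ∀ x ∈ U, ∀ y : Fin n → ℝ, y ≠ 0 →
      (Matrix.of fun i l =>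
        (1 / 2) * pdy (pdy (fun x' y' => A x' y' ^ ((2 : ℝ) / (m : ℝ))) l) i x y)
          * ginv x y = 1 ∧
      ginv x y * (Matrix.of fun i l =>
        (1 / 2) * pdy (pdy (fun x' y' => A x' y' ^ ((2 : ℝ) / (m : ℝ))) l) i x y) = 1) :
    ∀ x ∈ U, ∀ y : Fin n → ℝ, y ≠ 0 → ∀ i : Fin n,
      (1 / 4) * ∑ l, ginv x y i l *
          ((∑ k, pdy (pdx (fun x' y' => A x' y' ^ ((2 : ℝ) / (m : ℝ))) k) l x y * y k)
            - pdx (fun x' y' => A x' y' ^ ((2 : ℝ) / (m : ℝ))) l x y)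
        = (1 / 2) * ∑ j,
            ((∑ k, pdy (pdx A k) j x y * y k) - pdx A j x y) * Ainv x y i j := by
  intro x hx y hy i
  -- notation
  set p : ℝ := (2 : ℝ) / (m : ℝ) with hp
  have hm1 : (1 : ℕ) ≤ m := le_trans (by norm_num) hm
  have hm1' : ((m : ℝ) - 1) ≠ 0 := by
    have : (2 : ℝ) ≤ (m : ℝ) := by exact_mod_cast hm
    intro h; nlinarith
  set f : (Fin n → ℝ) → ℝ := Qp (fun ι => a ι x) with hfdef
  have hfA : ∀ y', A x y' = f y' := fun y' => hA x hx y'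
  have hAxf : A x = f := funext hfA
  have hle1 : (1 : WithTop ℕ∞) ≤ ((⊤ : ℕ∞) : WithTop ℕ∞) := by
    exact_mod_cast (le_top : (1 : ℕ∞) ≤ ⊤)
  have hf : ContDiff ℝ (⊤ : ℕ∞) f := Qp_contDiff _
  have hfdiff : Differentiable ℝ f := hf.differentiable (by simp)
  have hfhom : ∀ (t : ℝ) (y' : Fin n → ℝ), f (t • y') = t ^ m * f y' := fun t y' =>
    Qp_homog _ t y'
  have hfpos : ∀ y' : Fin n → ℝ, y' ≠ 0 → 0 < f y' := by
    intro y' h; rw [← hfA]; exact hApos x hx y' h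
  have hPne : f y ≠ 0 := ne_of_gt (hfpos y hy)
  set g : Fin n → (Fin n → ℝ) → ℝ :=
    fun k => Qp (fun ι => fderiv ℝ (a ι) x (Pi.single k 1)) with hgdef
  have hgdiff : ∀ k, Differentiable ℝ (g k) := fun k =>
    (Qp_contDiff _).differentiable (by simp)
  have hdiffa : ∀ ι, DifferentiableAt ℝ (a ι) x := fun ι =>
    ((ha_smooth ι).contDiffAt (hU.mem_nhds hx)).differentiableAt (by simp)
  -- x-derivative of A
  set D : (Fin n → ℝ) → (Fin n → ℝ) →L[ℝ] ℝ :=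
    fun y' => ∑ ι : Fin m → Fin n, (∏ j, y' (ι j)) • fderiv ℝ (a ι) x with hDdef
  have hAx : ∀ y', HasFDerivAt (fun x' => A x' y') (D y') x := by
    intro y'
    have hpoly : HasFDerivAt (fun x' => ∑ ι : Fin m → Fin n, a ι x' * ∏ j, y' (ι j))
        (D y') x := by
      apply HasFDerivAt.fun_sum
      intro ι _
      exact (hdiffa ι).hasFDerivAt.mul_const _
    apply hpoly.congr_of_eventuallyEq
    filter_upwards [hU.mem_nhds hx] with x' hx' using hA x' hx' y'
  have hDg : ∀ (y' : Fin n → ℝ) (k : Fin n), D y' (Pi.single k 1) = g k y' := by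
    intro y' k
    simp only [hDdef, hgdef, Qp, ContinuousLinearMap.coe_sum', Finset.sum_apply,
      ContinuousLinearMap.smul_apply, smul_eq_mul]
    exact Finset.sum_congr rfl fun ι _ => mul_comm _ _
  have hpdxA : ∀ (k : Fin n) (y' : Fin n → ℝ), pdx A k x y' = g k y' := by
    intro k y'
    show fderiv ℝ (fun x' => A x' y') x (Pi.single k 1) = g k y'
    rw [(hAx y').fderiv]; exact hDg y' k
  have hpdyA : ∀ (j : Fin n) (y' : Fin n → ℝ),
      pdy A j x y' = fderiv ℝ f y' (Pi.single j 1) := by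
    intro j y'
    show fderiv ℝ (A x) y' (Pi.single j 1) = _
    rw [hAxf]
  have hpdyyA : ∀ i' j : Fin n, pdy (pdy A j) i' x y
      = fderiv ℝ (fun y' => fderiv ℝ f y' (Pi.single j 1)) y (Pi.single i' 1) := by
    intro i' j
    show fderiv ℝ (pdy A j x) y (Pi.single i' 1) = _
    rw [show pdy A j x = (fun y' => fderiv ℝ f y' (Pi.single j 1)) from funext (hpdyA j)]
  have hpdyxA : ∀ k l : Fin n, pdy (pdx A k) l x y
      = fderiv ℝ (g k) y (Pi.single l 1) := by
    intro k l
    show fderiv ℝ (pdx A k x) y (Pi.single l 1) = _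
    rw [show pdx A k x = g k from funext (hpdxA k)]
  -- derivatives of F² = A^p
  have hpdxF2 : ∀ (l : Fin n) (y' : Fin n → ℝ), y' ≠ 0 →
      pdx (fun x' y' => A x' y' ^ p) l x y' = p * f y' ^ (p - 1) * g l y' := by
    intro l y' hy'
    show fderiv ℝ (fun x' => A x' y' ^ p) x (Pi.single l 1) = _
    rw [((hAx y').rpow_const (Or.inl (ne_of_gt (hApos x hx y' hy')))).fderiv]
    simp only [ContinuousLinearMap.smul_apply, smul_eq_mul]
    rw [hDg y' l, hfA y', mul_assoc]
  have hpdyF2 : ∀ (l : Fin n) (y' : Fin n → ℝ), y' ≠ 0 →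
      pdy (fun x' y' => A x' y' ^ p) l x y'
        = p * f y' ^ (p - 1) * fderiv ℝ f y' (Pi.single l 1) := by
    intro l y' hy'
    show fderiv ℝ (fun y'' => A x y'' ^ p) y' (Pi.single l 1) = _
    rw [hAxf]
    exact fderiv_rpow_apply (hfdiff y') (ne_of_gt (hfpos y' hy')) p _
  have hnhds : ∀ᶠ y' in nhds y, y' ≠ 0 := by
    filter_upwards [IsOpen.mem_nhds isOpen_compl_singleton hy] with y' hy'
    exact hy'
  have hpdyxF2 : ∀ k l : Fin n,
      pdy (pdx (fun x' y' => A x' y' ^ p) k) l x y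
        = p * (p - 1) * f y ^ (p - 2) * fderiv ℝ f y (Pi.single l 1) * g k y
          + p * f y ^ (p - 1) * fderiv ℝ (g k) y (Pi.single l 1) := by
    intro k l
    show fderiv ℝ (pdx (fun x' y' => A x' y' ^ p) k x) y (Pi.single l 1) = _
    have heq : (pdx (fun x' y' => A x' y' ^ p) k x)
        =ᶠ[nhds y] fun y' => p * f y' ^ (p - 1) * g k y' := by
      filter_upwards [hnhds] with y' hy'
      exact hpdxF2 k y' hy'
    rw [heq.fderiv_eq]
    exact fderiv_rpow_mul (hfdiff y) ((hgdiff k) y) hPne p _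
  have hhl : ∀ l : Fin n,
      Differentiable ℝ (fun y' => fderiv ℝ f y' (Pi.single l 1)) := by
    intro l
    have hfd : ContDiff ℝ (⊤ : ℕ∞) (fderiv ℝ f) := hf.fderiv_right (by
      exact_mod_cast (le_top : ((⊤ : ℕ∞) + 1 : ℕ∞) ≤ ⊤))
    exact ((hfd.clm_apply contDiff_const)).differentiable (by simp)
  have hpdyyF2 : ∀ l i' : Fin n,
      pdy (pdy (fun x' y' => A x' y' ^ p) l) i' x y
        = p * (p - 1) * f y ^ (p - 2) * fderiv ℝ f y (Pi.single i' 1)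
            * fderiv ℝ f y (Pi.single l 1)
          + p * f y ^ (p - 1)
            * fderiv ℝ (fun y' => fderiv ℝ f y' (Pi.single l 1)) y (Pi.single i' 1) := by
    intro l i'
    show fderiv ℝ (pdy (fun x' y' => A x' y' ^ p) l x) y (Pi.single i' 1) = _
    have heq : (pdy (fun x' y' => A x' y' ^ p) l x)
        =ᶠ[nhds y] fun y' => p * f y' ^ (p - 1) * fderiv ℝ f y' (Pi.single l 1) := by
      filter_upwards [hnhds] with y' hy'
      exact hpdyF2 l y' hy'
    rw [heq.fderiv_eq]
    exact fderiv_rpow_mul (hfdiff y) ((hhl l) y) hPne p _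
  -- Euler identities
  have hEg : ∀ k : Fin n,
      ∑ j, fderiv ℝ (g k) y (Pi.single j 1) * y j = (m : ℝ) * g k y := by
    intro k
    have := euler_sum (d := m) ((hgdiff k) y)
      (fun t _ => Qp_homog _ t y)
    rw [← this]
    exact Finset.sum_congr rfl fun j _ => mul_comm _ _
  have hEh : ∀ j : Fin n,
      ∑ i', y i' * fderiv ℝ (fun y' => fderiv ℝ f y' (Pi.single j 1)) y (Pi.single i' 1)
        = ((m : ℝ) - 1) * fderiv ℝ f y (Pi.single j 1) := by
    intro j
    have hcast : (((m - 1 : ℕ) : ℝ)) = (m : ℝ) - 1 := by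
      rw [Nat.cast_sub hm1, Nat.cast_one]
    rw [← hcast]
    exact euler_sum (d := m - 1) ((hhl j) y)
      (fun t ht => fderiv_homog hm1 hfdiff hfhom ht y (Pi.single j 1))
  -- abbreviations for the algebra
  set AL : Fin n → ℝ := fun j => fderiv ℝ f y (Pi.single j 1) with hALdef
  set HH : Fin n → Fin n → ℝ :=
    fun i' j => fderiv ℝ (fun y' => fderiv ℝ f y' (Pi.single j 1)) y (Pi.single i' 1)
    with hHHdef
  set GK : Fin n → ℝ := fun k => g k y with hGKdef
  set GK' : Fin n → Fin n → ℝ := fun k l => fderiv ℝ (g k) y (Pi.single l 1) with hGK'def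
  set b : Fin n → ℝ := fun j => (∑ k, GK' k j * y k) - GK j with hbdef
  set A0 : ℝ := ∑ k, GK k * y k with hA0def
  set c1 : ℝ := p * f y ^ (p - 1) with hc1def
  set c2 : ℝ := p * (p - 1) * f y ^ (p - 2) with hc2def
  set v : Fin n → ℝ := fun j => ∑ k, Ainv x y j k * b k with hvdef
  obtain ⟨hH1, hH2⟩ := hAinv x hx y hy
  obtain ⟨hg1, hg2⟩ := hginv x hx y hy
  -- Euler: ∑ k, y k * b k = (m-1) * A0
  have hyb : ∑ k, y k * b k = ((m : ℝ) - 1) * A0 := by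
    have h1 : ∀ k : Fin n, y k * b k = (∑ j, y k * (GK' j k * y j)) - y k * GK k := by
      intro k
      simp only [hbdef]
      rw [mul_sub, Finset.mul_sum]
    rw [Finset.sum_congr rfl fun k (_ : k ∈ Finset.univ) => h1 k,
      Finset.sum_sub_distrib, Finset.sum_comm]
    have h2 : ∀ j : Fin n, ∑ k, y k * (GK' j k * y j) = ((m : ℝ) * GK j) * y j := by
      intro j
      have : ∑ k, y k * (GK' j k * y j) = (∑ k, GK' j k * y k) * y j := by
        rw [Finset.sum_mul]
        exact Finset.sum_congr rfl fun k _ => by ring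
      rw [this, hEg j]
    rw [Finset.sum_congr rfl fun j (_ : j ∈ Finset.univ) => h2 j]
    have h3 : ∑ j, ((m : ℝ) * GK j) * y j = (m : ℝ) * A0 := by
      rw [hA0def, Finset.mul_sum]
      exact Finset.sum_congr rfl fun j _ => by ring
    have h4 : ∑ k, y k * GK k = A0 := by
      rw [hA0def]
      exact Finset.sum_congr rfl fun k _ => mul_comm _ _
    rw [h3, h4]
    ring
  -- the Hessian hypothesis in terms of HH
  have hHof : (Matrix.of fun i' j => pdy (pdy A j) i' x y) = Matrix.of HH := by
    funext i' j
    simpa using hpdyyA i' j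
  rw [hHof] at hH1 hH2
  have hHinv : ∀ l k : Fin n, ∑ j, HH l j * Ainv x y j k = if l = k then 1 else 0 := by
    intro l k
    have := congrFun (congrFun hH1 l) k
    rw [Matrix.mul_apply] at this
    simpa [Matrix.one_apply] using this
  -- ∑_j AL j * Ainv j k = (m-1)⁻¹ * y k
  have hALinv : ∀ k : Fin n, ∑ j, AL j * Ainv x y j k = ((m : ℝ) - 1)⁻¹ * y k := by
    intro k
    have hmul : ((m : ℝ) - 1) * ∑ j, AL j * Ainv x y j k = y k := by
      rw [Finset.mul_sum]
      have h1 : ∀ j, ((m : ℝ) - 1) * (AL j * Ainv x y j k)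
          = (∑ i', y i' * HH i' j) * Ainv x y j k := by
        intro j
        rw [hEh j]
        ring
      rw [Finset.sum_congr rfl fun j _ => h1 j]
      have h2 : ∑ j, (∑ i', y i' * HH i' j) * Ainv x y j k
          = ∑ i', y i' * ∑ j, HH i' j * Ainv x y j k := by
        rw [Finset.sum_congr rfl fun j (_ : j ∈ Finset.univ) =>
          Finset.sum_mul Finset.univ (fun i' => y i' * HH i' j) (Ainv x y j k)]
        rw [Finset.sum_comm]
        refine Finset.sum_congr rfl fun i' _ => ?_
        rw [Finset.mul_sum]
        exact Finset.sum_congr rfl fun j _ => by ring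
      rw [h2]
      rw [Finset.sum_congr rfl fun i' (_ : i' ∈ Finset.univ) => by rw [hHinv i' k]]
      simp
    have := congrArg (fun z => ((m : ℝ) - 1)⁻¹ * z) hmul
    change ((m : ℝ) - 1)⁻¹ * (((m : ℝ) - 1) * ∑ j, AL j * Ainv x y j k) = ((m : ℝ) - 1)⁻¹ * y k at this
    rw [← this, ← mul_assoc, inv_mul_cancel₀ hm1', one_mul]
  -- identify the right-hand side of the goal
  have hbgoal : ∀ j : Fin n,
      (∑ k, pdy (pdx A k) j x y * y k) - pdx A j x y = b j := by
    intro j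
    simp only [hbdef]
    congr 1
    · exact Finset.sum_congr rfl fun k _ => by rw [hpdyxA k j]
    · exact hpdxA j y
  -- the spray numerator
  have hw : ∀ l : Fin n,
      (∑ k, pdy (pdx (fun x' y' => A x' y' ^ p) k) l x y * y k)
          - pdx (fun x' y' => A x' y' ^ p) l x y
        = c2 * AL l * A0 + c1 * b l := by
    intro l
    have hsum : ∑ k, pdy (pdx (fun x' y' => A x' y' ^ p) k) l x y * y k
        = c2 * AL l * A0 + c1 * ∑ k, GK' k l * y k := by
      simp only [hA0def]
      rw [Finset.mul_sum, Finset.mul_sum, ← Finset.sum_add_distrib]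
      refine Finset.sum_congr rfl fun k _ => ?_
      rw [hpdyxF2 k l]
      simp only [hc1def, hc2def, hALdef, hGKdef, hGK'def]
      ring
    rw [hsum, hpdxF2 l y hy]
    simp only [hbdef, hc1def, hGKdef]
    ring
  -- the key pointwise identity
  have hHv : ∀ l : Fin n, ∑ j, HH l j * v j = b l := by
    intro l
    simp only [hvdef]
    have h1 : ∑ j, HH l j * ∑ k, Ainv x y j k * b k
        = ∑ k, (∑ j, HH l j * Ainv x y j k) * b k := by
      rw [Finset.sum_congr rfl fun j (_ : j ∈ Finset.univ) => Finset.mul_sum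
        Finset.univ (fun k => Ainv x y j k * b k) (HH l j)]
      rw [Finset.sum_comm]
      refine Finset.sum_congr rfl fun k _ => ?_
      rw [Finset.sum_mul]
      exact Finset.sum_congr rfl fun j _ => by ring
    rw [h1]
    rw [Finset.sum_congr rfl fun k (_ : k ∈ Finset.univ) => by rw [hHinv l k]]
    simp
  have hAv : ∑ j, AL j * v j = A0 := by
    simp only [hvdef]
    have h1 : ∑ j, AL j * ∑ k, Ainv x y j k * b k
        = ∑ k, (∑ j, AL j * Ainv x y j k) * b k := by
      rw [Finset.sum_congr rfl fun j (_ : j ∈ Finset.univ) => Finset.mul_sum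
        Finset.univ (fun k => Ainv x y j k * b k) (AL j)]
      rw [Finset.sum_comm]
      refine Finset.sum_congr rfl fun k _ => ?_
      rw [Finset.sum_mul]
      exact Finset.sum_congr rfl fun j _ => by ring
    rw [h1]
    rw [Finset.sum_congr rfl fun k (_ : k ∈ Finset.univ) => by rw [hALinv k]]
    have h2 : ∑ k, ((m : ℝ) - 1)⁻¹ * y k * b k
        = ((m : ℝ) - 1)⁻¹ * ∑ k, y k * b k := by
      rw [Finset.mul_sum]
      exact Finset.sum_congr rfl fun k _ => by ring
    rw [h2, hyb, ← mul_assoc, inv_mul_cancel₀ hm1', one_mul]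
  have hkey : ∀ l : Fin n, c2 * AL l * A0 + c1 * b l
      = ∑ j, pdy (pdy (fun x' y' => A x' y' ^ p) j) l x y * v j := by
    intro l
    have hM : ∀ j : Fin n, pdy (pdy (fun x' y' => A x' y' ^ p) j) l x y
        = c2 * AL l * AL j + c1 * HH l j := by
      intro j
      rw [hpdyyF2 j l]
    rw [Finset.sum_congr rfl fun j (_ : j ∈ Finset.univ) => by rw [hM j]]
    have hexp : ∑ j, (c2 * AL l * AL j + c1 * HH l j) * v j
        = c2 * AL l * (∑ j, AL j * v j) + c1 * (∑ j, HH l j * v j) := by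
      rw [Finset.mul_sum, Finset.mul_sum, ← Finset.sum_add_distrib]
      exact Finset.sum_congr rfl fun j _ => by ring
    rw [hexp, hAv, hHv l]
  -- assemble
  have hgentry : ∀ j : Fin n,
      ∑ l, ginv x y i l * pdy (pdy (fun x' y' => A x' y' ^ p) j) l x y
        = 2 * (if i = j then (1:ℝ) else 0) := by
    intro j
    have := congrFun (congrFun hg2 i) j
    rw [Matrix.mul_apply] at this
    simp only [Matrix.of_apply, Matrix.one_apply] at this
    rw [← this, Finset.mul_sum]
    exact Finset.sum_congr rfl fun l _ => by ring
  calc (1 / 4 : ℝ) * ∑ l, ginv x y i l *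
          ((∑ k, pdy (pdx (fun x' y' => A x' y' ^ p) k) l x y * y k)
            - pdx (fun x' y' => A x' y' ^ p) l x y)
      = 1 / 4 * ∑ l, ginv x y i l *
          ∑ j, pdy (pdy (fun x' y' => A x' y' ^ p) j) l x y * v j := by
        congr 1
        refine Finset.sum_congr rfl fun l _ => ?_
        rw [hw l, hkey l]
    _ = 1 / 4 * ∑ j, (∑ l, ginv x y i l
          * pdy (pdy (fun x' y' => A x' y' ^ p) j) l x y) * v j := by
        congr 1
        rw [Finset.sum_congr rfl fun l (_ : l ∈ Finset.univ) => Finset.mul_sum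
          Finset.univ (fun j => pdy (pdy (fun x' y' => A x' y' ^ p) j) l x y * v j)
          (ginv x y i l)]
        rw [Finset.sum_comm]
        refine Finset.sum_congr rfl fun j _ => ?_
        rw [Finset.sum_mul]
        exact Finset.sum_congr rfl fun l _ => by ring
    _ = 1 / 4 * ∑ j, (2 * (if i = j then (1:ℝ) else 0)) * v j := by
        congr 1
        exact Finset.sum_congr rfl fun j _ => by rw [hgentry j]
    _ = 1 / 2 * v i := by
        simp [ite_mul, Finset.mul_sum]
        ring
    _ = 1 / 2 * ∑ j, ((∑ k, pdy (pdx A k) j x y * y k) - pdx A j x y) * Ainv x y i j := by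
        congr 1
        simp only [hvdef]
        refine Finset.sum_congr rfl fun j _ => ?_
        rw [hbgoal j]
        ring
end

section
/- Let F = A^{1/m} be an m-th root Finsler metric on an open subset U ⊆ ℝⁿ whose Hessian matrix (A_{ij}) is invertible, so the spray coefficients are G^i = (1/2)(A_{0j} − A_{x^j}) A^{ij}. If F is an Antonelli metric, i.e. there exist functions Γ^i_{jk}(y), smooth on ℝⁿ ∖ {0}, symmetric in j and k, positively homogeneous of degree 0 in y, such that G^i = (1/2) Γ^i_{jk}(y) y^j y^k, then A_{x^l} = [ Γ^i_{lk} y^k + (1/2) Γ^i_{jk,l} y^j y^k ] A_i for every l, where Γ^i_{jk,l} = ∂Γ^i_{jk}/∂y^l. -/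
open scoped BigOperators

/-- Partial derivative of a function of `y` alone with respect to `y^l`. -/
noncomputable def pd {n : ℕ} (f : (Fin n → ℝ) → ℝ) (l : Fin n) (y : Fin n → ℝ) : ℝ :=
  fderiv ℝ f y (Pi.single l 1)

/-- `Γ^i_{jk}(y)` is an admissible family of Antonelli coefficients: smooth away from the
origin, symmetric in the lower indices, and positively homogeneous of degree `0` in `y`. -/
def GammaAdmissible {n : ℕ} (Γ : Fin n → Fin n → Fin n → (Fin n → ℝ) → ℝ) : Prop :=
  (∀ i j k, ContDiffOn ℝ (⊤ : ℕ∞) (Γ i j k) {y : Fin n → ℝ | y ≠ 0}) ∧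
  (∀ i j k, Γ i j k = Γ i k j) ∧
  (∀ i j k, ∀ y : Fin n → ℝ, y ≠ 0 → ∀ t : ℝ, 0 < t → Γ i j k (t • y) = Γ i j k y)

noncomputable def Qpoly {n p : ℕ} (c : (Fin p → Fin n) → ℝ) : (Fin n → ℝ) → ℝ :=
  fun y => ∑ ι : Fin p → Fin n, c ι * ∏ k, y (ι k)

lemma Qpoly_contDiff {n p : ℕ} (c : (Fin p → Fin n) → ℝ) : ContDiff ℝ (⊤ : ℕ∞) (Qpoly c) :=
  ContDiff.sum fun ι _ => contDiff_const.mul <| contDiff_prod fun k _ =>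
    (ContinuousLinearMap.proj (ι k) : (Fin n → ℝ) →L[ℝ] ℝ).contDiff

lemma Qpoly_homog {n p : ℕ} (c : (Fin p → Fin n) → ℝ) (t : ℝ) (y : Fin n → ℝ) :
    Qpoly c (t • y) = t ^ p * Qpoly c y := by
  unfold Qpoly
  rw [Finset.mul_sum]
  refine Finset.sum_congr rfl fun ι _ => ?_
  have : (∏ k, (t • y) (ι k)) = ∏ k, t * y (ι k) := rfl
  rw [this, Finset.prod_mul_distrib, Finset.prod_const]
  simp [Finset.card_univ]
  ring

lemma clm_apply_eq_sum {n : ℕ} (φ : (Fin n → ℝ) →L[ℝ] ℝ) (y : Fin n → ℝ) :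
    φ y = ∑ j, y j * φ (Pi.single j 1) := by
  have hy : y = ∑ j, y j • (Pi.single j 1 : Fin n → ℝ) := by
    funext k
    simp [Finset.sum_apply, Pi.single_apply]
  conv_lhs => rw [hy]
  rw [map_sum]
  exact Finset.sum_congr rfl fun j _ => by rw [map_smul]; rfl

lemma contDiff_pd {n : ℕ} {f : (Fin n → ℝ) → ℝ} (hf : ContDiff ℝ (⊤ : ℕ∞) f) (l : Fin n) :
    ContDiff ℝ (⊤ : ℕ∞) (pd f l) := by
  have h1 : ContDiff ℝ (⊤ : ℕ∞) (fun y => fderiv ℝ f y) := hf.fderiv_right (by exact_mod_cast le_top)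
  have h2 := (ContinuousLinearMap.apply ℝ ℝ (Pi.single l 1 : Fin n → ℝ)).contDiff.comp h1
  exact h2

lemma euler_aux {n d : ℕ} {g : (Fin n → ℝ) → ℝ} {y : Fin n → ℝ}
    (hg : DifferentiableAt ℝ g y)
    (hh : ∀ t : ℝ, 0 < t → g (t • y) = t ^ d * g y) :
    ∑ j, pd g j y * y j = d * g y := by
  have h1 : HasDerivAt (fun t : ℝ => t • y) y 1 := by
    simpa using (hasDerivAt_id (1 : ℝ)).smul_const y
  have hg' : HasFDerivAt g (fderiv ℝ g y) ((1:ℝ) • y) := by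
    rw [one_smul]; exact hg.hasFDerivAt
  have h2 : HasDerivAt (fun t : ℝ => g (t • y)) (fderiv ℝ g y y) 1 := by
    exact hg'.comp_hasDerivAt 1 h1
  have h3 : HasDerivAt (fun t : ℝ => t ^ d * g y) ((d : ℝ) * g y) 1 := by
    simpa using (hasDerivAt_pow d (1 : ℝ)).mul_const (g y)
  have hev : (fun t : ℝ => t ^ d * g y) =ᶠ[nhds (1 : ℝ)] (fun t => g (t • y)) := by
    filter_upwards [eventually_gt_nhds (zero_lt_one (α := ℝ))] with t ht
    exact (hh t ht).symm
  have h4 : HasDerivAt (fun t : ℝ => g (t • y)) ((d : ℝ) * g y) 1 :=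
    h3.congr_of_eventuallyEq hev.symm
  have h5 : fderiv ℝ g y y = (d : ℝ) * g y := h2.unique h4
  rw [← h5, clm_apply_eq_sum (fderiv ℝ g y) y]
  exact Finset.sum_congr rfl fun j _ => mul_comm _ _

lemma pd_homog {n p : ℕ} (hp : 1 ≤ p) (c : (Fin p → Fin n) → ℝ) (i : Fin n)
    (y : Fin n → ℝ) (t : ℝ) (ht : 0 < t) :
    pd (Qpoly c) i (t • y) = t ^ (p - 1) * pd (Qpoly c) i y := by
  have hd := (Qpoly_contDiff c).differentiable (by simp)
  have hL : HasFDerivAt (fun z : Fin n → ℝ => t • z)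
      (t • ContinuousLinearMap.id ℝ (Fin n → ℝ)) y := by
    exact (t • ContinuousLinearMap.id ℝ (Fin n → ℝ)).hasFDerivAt
  have hF : HasFDerivAt (fun z => Qpoly c (t • z))
      ((fderiv ℝ (Qpoly c) (t • y)).comp (t • ContinuousLinearMap.id ℝ (Fin n → ℝ))) y :=
    (hd (t • y)).hasFDerivAt.comp y hL
  have hF2 : HasFDerivAt (fun z => t ^ p * Qpoly c z)
      (t ^ p • fderiv ℝ (Qpoly c) y) y := by
    simpa using (hd y).hasFDerivAt.const_mul (t ^ p)
  have heqfun : (fun z => Qpoly c (t • z)) = fun z => t ^ p * Qpoly c z :=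
    funext fun z => Qpoly_homog c t z
  rw [heqfun] at hF
  have h5 := hF.unique hF2
  have h6 := congrFun (congrArg (fun (φ : (Fin n → ℝ) →L[ℝ] ℝ) => (φ : (Fin n → ℝ) → ℝ))
    h5) (Pi.single i 1)
  simp only [ContinuousLinearMap.comp_apply, ContinuousLinearMap.smul_apply,
    ContinuousLinearMap.coe_smul', Pi.smul_apply, ContinuousLinearMap.coe_id', id_eq] at h6
  have h7 : t * fderiv ℝ (Qpoly c) (t • y) (Pi.single i 1)
      = t ^ p * fderiv ℝ (Qpoly c) y (Pi.single i 1) := by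
    simpa [map_smul, smul_eq_mul, mul_comm] using h6
  unfold pd
  have ht' : t ≠ 0 := ne_of_gt ht
  apply mul_left_cancel₀ ht'
  rw [h7, ← mul_assoc]
  congr 1
  rw [← pow_succ', Nat.sub_add_cancel hp]

lemma euler_Qpoly {n p : ℕ} (c : (Fin p → Fin n) → ℝ) (y : Fin n → ℝ) :
    ∑ j, pd (Qpoly c) j y * y j = p * Qpoly c y :=
  euler_aux ((Qpoly_contDiff c).differentiable (by simp) y)
    (fun t _ => Qpoly_homog c t y)

lemma euler_pd_Qpoly {n p : ℕ} (hp : 1 ≤ p) (c : (Fin p → Fin n) → ℝ) (i : Fin n)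
    (y : Fin n → ℝ) :
    ∑ l, pd (pd (Qpoly c) i) l y * y l = (p - 1 : ℕ) * pd (Qpoly c) i y :=
  euler_aux ((contDiff_pd (Qpoly_contDiff c) i).differentiable (by simp) y)
    (fun t ht => pd_homog hp c i y t ht)

lemma fderiv_sum_apply' {n : ℕ} {ι : Type*} (s : Finset ι) (f : ι → (Fin n → ℝ) → ℝ)
    {y : Fin n → ℝ} (h : ∀ i ∈ s, DifferentiableAt ℝ (f i) y) (v : Fin n → ℝ) :
    fderiv ℝ (fun y' => ∑ i ∈ s, f i y') y v = ∑ i ∈ s, fderiv ℝ (f i) y v := by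
  rw [fderiv_fun_sum h]
  simp

lemma fderiv_mul_apply' {n : ℕ} {f g : (Fin n → ℝ) → ℝ} {y v : Fin n → ℝ}
    (hf : DifferentiableAt ℝ f y) (hg : DifferentiableAt ℝ g y) :
    fderiv ℝ (fun y' => f y' * g y') y v = fderiv ℝ f y v * g y + f y * fderiv ℝ g y v := by
  rw [fderiv_fun_mul hf hg]
  simp [smul_eq_mul]
  ring

lemma differentiableAt_coord {n : ℕ} (k : Fin n) (y : Fin n → ℝ) :
    DifferentiableAt ℝ (fun y' : Fin n → ℝ => y' k) y :=
  (ContinuousLinearMap.proj k : (Fin n → ℝ) →L[ℝ] ℝ).differentiableAt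

lemma fderiv_coord {n : ℕ} (k l : Fin n) (y : Fin n → ℝ) :
    fderiv ℝ (fun y' : Fin n → ℝ => y' k) y (Pi.single l 1) = if k = l then 1 else 0 := by
  have h : fderiv ℝ (fun y' : Fin n → ℝ => y' k) y
      = (ContinuousLinearMap.proj k : (Fin n → ℝ) →L[ℝ] ℝ) :=
    (ContinuousLinearMap.proj k : (Fin n → ℝ) →L[ℝ] ℝ).fderiv
  rw [h]
  simp [ContinuousLinearMap.proj_apply, Pi.single_apply]

noncomputable def Pfun {n : ℕ} (Γ : Fin n → Fin n → Fin n → (Fin n → ℝ) → ℝ)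
    (i : Fin n) (y : Fin n → ℝ) : ℝ :=
  ∑ j, ∑ k, Γ i j k y * y j * y k

lemma sum_sum_mul_comm {n : ℕ} (f : Fin n → Fin n → ℝ) (g : Fin n → ℝ) :
    ∑ l, (∑ i, f i l) * g l = ∑ i, ∑ l, f i l * g l := by
  calc ∑ l, (∑ i, f i l) * g l = ∑ l, ∑ i, f i l * g l :=
        Finset.sum_congr rfl fun l _ => Finset.sum_mul _ _ _
    _ = ∑ i, ∑ l, f i l * g l := Finset.sum_comm

/-- If the `m`-th root metric `F = A^{1/m}` is an Antonelli metric with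
coefficients `Γ^i_{jk}(y)`, then `A_{x^l} = [Γ^i_{lk} y^k + (1/2) Γ^i_{jk,l} y^j y^k] A_i`. -/
theorem antonelli_mth_root_necessary
    {n m : ℕ} (hm : 2 ≤ m)
    (U : Set (Fin n → ℝ)) (hU : IsOpen U)
    (a : (Fin m → Fin n) → (Fin n → ℝ) → ℝ)
    (ha_smooth : ∀ ι, ContDiffOn ℝ (⊤ : ℕ∞) (a ι) U)
    (ha_symm : ∀ (ι : Fin m → Fin n) (σ : Equiv.Perm (Fin m)), a (ι ∘ σ) = a ι)
    (A : (Fin n → ℝ) → (Fin n → ℝ) → ℝ)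
    (hA : ∀ x ∈ U, ∀ y : Fin n → ℝ, A x y = ∑ ι : Fin m → Fin n, a ι x * ∏ k, y (ι k))
    (hApos : ∀ x ∈ U, ∀ y : Fin n → ℝ, y ≠ 0 → 0 < A x y)
    -- (A^{ij}) : the inverse of the Hessian (A_{ij}) = (∂²A/∂y^i∂y^j)
    (Ainv : (Fin n → ℝ) → (Fin n → ℝ) → Matrix (Fin n) (Fin n) ℝ)
    (hAinv : ∀ x ∈ U, ∀ y : Fin n → ℝ, y ≠ 0 →
      (Matrix.of fun i j => pdy (pdy A j) i x y) * Ainv x y = 1 ∧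
      Ainv x y * (Matrix.of fun i j => pdy (pdy A j) i x y) = 1)
    (Γ : Fin n → Fin n → Fin n → (Fin n → ℝ) → ℝ)
    (hΓ : GammaAdmissible Γ)
    -- F is an Antonelli metric: G^i = (1/2) Γ^i_{jk}(y) y^j y^k
    (hAnt : ∀ x ∈ U, ∀ y : Fin n → ℝ, y ≠ 0 → ∀ i : Fin n,
      (1 / 2) * ∑ j, ((∑ k, pdy (pdx A k) j x y * y k) - pdx A j x y) * Ainv x y i j
        = (1 / 2) * ∑ j, ∑ k, Γ i j k y * y j * y k) :
    ∀ l : Fin n, ∀ x ∈ U, ∀ y : Fin n → ℝ, y ≠ 0 →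
      pdx A l x y
        = ∑ i, ((∑ k, Γ i l k y * y k)
            + (1 / 2) * ∑ j, ∑ k, pd (Γ i j k) l y * y j * y k) * pdy A i x y := by
  obtain ⟨hΓs, hΓsymm, hΓhom⟩ := hΓ
  intro l x hx y hy
  classical
  set c0 : (Fin m → Fin n) → ℝ := fun ι => a ι x with hc0
  set c1 : Fin n → (Fin m → Fin n) → ℝ := fun l' ι => fderiv ℝ (a ι) x (Pi.single l' 1) with hc1
  have hQ0 : A x = Qpoly c0 := funext fun y' => hA x hx y'
  have hdiff_a : ∀ ι, DifferentiableAt ℝ (a ι) x := fun ι =>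
    (((ha_smooth ι).differentiableOn (by simp)) x hx).differentiableAt
      (hU.mem_nhds hx)
  have hpdx : ∀ (l' : Fin n) (y' : Fin n → ℝ), pdx A l' x y' = Qpoly (c1 l') y' := by
    intro l' y'
    have hev : (fun x' => A x' y') =ᶠ[nhds x]
        (fun x' => ∑ ι : Fin m → Fin n, a ι x' * ∏ k, y' (ι k)) :=
      Filter.eventuallyEq_of_mem (hU.mem_nhds hx) fun x' hx' => hA x' hx' y'
    show fderiv ℝ (fun x' => A x' y') x (Pi.single l' 1) = _
    rw [hev.fderiv_eq,
      fderiv_sum_apply' Finset.univ _ (fun ι _ => (hdiff_a ι).mul_const _) _]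
    refine Finset.sum_congr rfl fun ι _ => ?_
    rw [fderiv_mul_const (hdiff_a ι)]
    simp only [ContinuousLinearMap.smul_apply, smul_eq_mul, hc1]
    ring
  have hpdy' : ∀ (i : Fin n) (y' : Fin n → ℝ), pdy A i x y' = pd (Qpoly c0) i y' := by
    intro i y'
    show fderiv ℝ (A x) y' (Pi.single i 1) = _
    rw [hQ0]; rfl
  have hpdy2 : ∀ (i l' : Fin n) (y' : Fin n → ℝ),
      pdy (pdy A i) l' x y' = pd (pd (Qpoly c0) i) l' y' := by
    intro i l' y'
    have hfun : pdy A i x = pd (Qpoly c0) i := funext fun y'' => hpdy' i y''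
    show fderiv ℝ (pdy A i x) y' (Pi.single l' 1) = _
    rw [hfun]; rfl
  have hpdx2 : ∀ (k j : Fin n) (y' : Fin n → ℝ),
      pdy (pdx A k) j x y' = pd (Qpoly (c1 k)) j y' := by
    intro k j y'
    have hfun : pdx A k x = Qpoly (c1 k) := funext fun y'' => hpdx k y''
    show fderiv ℝ (pdx A k x) y' (Pi.single j 1) = _
    rw [hfun]; rfl
  have hΓd : ∀ i j k (y' : Fin n → ℝ), y' ≠ 0 → DifferentiableAt ℝ (Γ i j k) y' := by
    intro i j k y' hy'
    exact (((hΓs i j k).differentiableOn (by simp)) y' hy').differentiableAt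
      (isOpen_ne.mem_nhds hy')
  have hPd : ∀ i (y' : Fin n → ℝ), y' ≠ 0 → DifferentiableAt ℝ (Pfun Γ i) y' := by
    intro i y' hy'
    show DifferentiableAt ℝ (fun y'' => ∑ j, ∑ k, Γ i j k y'' * y'' j * y'' k) y'
    refine DifferentiableAt.fun_sum fun j _ => DifferentiableAt.fun_sum fun k _ => ?_
    exact ((hΓd i j k y' hy').mul (differentiableAt_coord j y')).mul (differentiableAt_coord k y')
  -- Step 1
  have step1 : ∀ (y' : Fin n → ℝ), y' ≠ 0 → ∀ l' : Fin n,
      (∑ k, pd (Qpoly (c1 k)) l' y' * y' k) - Qpoly (c1 l') y'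
        = ∑ i, pd (pd (Qpoly c0) i) l' y' * Pfun Γ i y' := by
    intro y' hy' l'
    have hant : ∀ i, (∑ j, ((∑ k, pd (Qpoly (c1 k)) j y' * y' k) - Qpoly (c1 j) y')
        * Ainv x y' i j) = Pfun Γ i y' := by
      intro i
      have h := hAnt x hx y' hy' i
      simp only [hpdx2, hpdx] at h
      exact mul_left_cancel₀ (by norm_num : (1/2 : ℝ) ≠ 0) h
    set B : Fin n → ℝ :=
      fun j => (∑ k, pd (Qpoly (c1 k)) j y' * y' k) - Qpoly (c1 j) y' with hB
    have hmv : (Ainv x y').mulVec B = fun i => Pfun Γ i y' := by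
      funext i
      have h := hant i
      simp only [Matrix.mulVec, dotProduct, hB]
      rw [← h]
      exact Finset.sum_congr rfl fun j _ => mul_comm _ _
    have hkey : B = (Matrix.of fun i j => pdy (pdy A j) i x y').mulVec
        (fun i => Pfun Γ i y') := by
      have h1 := (hAinv x hx y' hy').1
      calc B = (1 : Matrix (Fin n) (Fin n) ℝ).mulVec B := by rw [Matrix.one_mulVec]
        _ = ((Matrix.of fun i j => pdy (pdy A j) i x y') * Ainv x y').mulVec B := by rw [h1]
        _ = (Matrix.of fun i j => pdy (pdy A j) i x y').mulVec ((Ainv x y').mulVec B) := by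
            rw [Matrix.mulVec_mulVec]
        _ = _ := by rw [hmv]
    have h2 : B l' = ∑ i, pdy (pdy A i) l' x y' * Pfun Γ i y' := by
      rw [hkey]
      simp [Matrix.mulVec, dotProduct, Matrix.of_apply]
    have h3 : (∑ k, pd (Qpoly (c1 k)) l' y' * y' k) - Qpoly (c1 l') y' = B l' := by rw [hB]
    rw [h3, h2]
    exact Finset.sum_congr rfl fun i _ => by rw [hpdy2]
  -- Euler identities
  have hm1 : 1 ≤ m := le_trans one_le_two hm
  have hE2 : ∀ (k : Fin n) (y' : Fin n → ℝ),
      ∑ l', pd (Qpoly (c1 k)) l' y' * y' l' = m * Qpoly (c1 k) y' :=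
    fun k y' => euler_Qpoly (c1 k) y'
  have hE3 : ∀ (i : Fin n) (y' : Fin n → ℝ),
      ∑ l', pd (pd (Qpoly c0) i) l' y' * y' l' = ((m : ℝ) - 1) * pd (Qpoly c0) i y' := by
    intro i y'
    have h := euler_pd_Qpoly hm1 c0 i y'
    rwa [Nat.cast_sub hm1, Nat.cast_one] at h
  -- Step 3
  have step3 : ∀ (y' : Fin n → ℝ), y' ≠ 0 →
      ∑ k, Qpoly (c1 k) y' * y' k = ∑ i, pd (Qpoly c0) i y' * Pfun Γ i y' := by
    intro y' hy'
    have h : ∑ l', ((∑ k, pd (Qpoly (c1 k)) l' y' * y' k) - Qpoly (c1 l') y') * y' l'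
        = ∑ l', (∑ i, pd (pd (Qpoly c0) i) l' y' * Pfun Γ i y') * y' l' :=
      Finset.sum_congr rfl fun l' _ => congrArg (· * y' l') (step1 y' hy' l')
    have hL : ∑ l', ((∑ k, pd (Qpoly (c1 k)) l' y' * y' k) - Qpoly (c1 l') y') * y' l'
        = (m : ℝ) * (∑ k, Qpoly (c1 k) y' * y' k) - ∑ k, Qpoly (c1 k) y' * y' k := by
      have e1 : ∀ l' : Fin n,
          ((∑ k, pd (Qpoly (c1 k)) l' y' * y' k) - Qpoly (c1 l') y') * y' l'
            = (∑ k, pd (Qpoly (c1 k)) l' y' * y' k) * y' l' - Qpoly (c1 l') y' * y' l' :=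
        fun l' => sub_mul _ _ _
      rw [Finset.sum_congr rfl fun l' _ => e1 l', Finset.sum_sub_distrib]
      congr 1
      · rw [sum_sum_mul_comm (fun k l' => pd (Qpoly (c1 k)) l' y' * y' k) y', Finset.mul_sum]
        refine Finset.sum_congr rfl fun k _ => ?_
        have : ∑ l', pd (Qpoly (c1 k)) l' y' * y' k * y' l'
            = (∑ l', pd (Qpoly (c1 k)) l' y' * y' l') * y' k := by
          rw [Finset.sum_mul]
          exact Finset.sum_congr rfl fun l' _ => by ring
        rw [this, hE2 k y']
        ring
    have hR : ∑ l', (∑ i, pd (pd (Qpoly c0) i) l' y' * Pfun Γ i y') * y' l'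
        = ((m : ℝ) - 1) * ∑ i, pd (Qpoly c0) i y' * Pfun Γ i y' := by
      rw [sum_sum_mul_comm (fun i l' => pd (pd (Qpoly c0) i) l' y' * Pfun Γ i y') y',
        Finset.mul_sum]
      refine Finset.sum_congr rfl fun i _ => ?_
      have : ∑ l', pd (pd (Qpoly c0) i) l' y' * Pfun Γ i y' * y' l'
          = (∑ l', pd (pd (Qpoly c0) i) l' y' * y' l') * Pfun Γ i y' := by
        rw [Finset.sum_mul]
        exact Finset.sum_congr rfl fun l' _ => by ring
      rw [this, hE3 i y']
      ring
    rw [hL, hR] at h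
    have hm' : (m : ℝ) - 1 ≠ 0 := by
      have h2 : (2 : ℝ) ≤ (m : ℝ) := by exact_mod_cast hm
      intro hcon; linarith
    apply mul_left_cancel₀ hm'
    linarith [h]
  -- differentiability for step 4
  have hDQ : ∀ (c : (Fin m → Fin n) → ℝ), Differentiable ℝ (Qpoly c) := fun c =>
    (Qpoly_contDiff c).differentiable (by simp)
  have hDpd : ∀ (i : Fin n), Differentiable ℝ (pd (Qpoly c0) i) := fun i =>
    (contDiff_pd (Qpoly_contDiff c0) i).differentiable (by simp)
  have hfd : fderiv ℝ (fun y' => ∑ k, Qpoly (c1 k) y' * y' k) y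
      = fderiv ℝ (fun y' => ∑ i, pd (Qpoly c0) i y' * Pfun Γ i y') y := by
    apply Filter.EventuallyEq.fderiv_eq
    filter_upwards [isOpen_ne.mem_nhds hy] with y' hy'
    exact step3 y' hy'
  have hfdL : fderiv ℝ (fun y' => ∑ k, Qpoly (c1 k) y' * y' k) y (Pi.single l 1)
      = (∑ k, pd (Qpoly (c1 k)) l y * y k) + Qpoly (c1 l) y := by
    rw [fderiv_sum_apply' Finset.univ (fun k y' => Qpoly (c1 k) y' * y' k)
      (fun k _ => ((hDQ (c1 k)) y).mul (differentiableAt_coord k y)) _]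
    have e : ∀ k : Fin n, fderiv ℝ (fun y' => Qpoly (c1 k) y' * y' k) y (Pi.single l 1)
        = pd (Qpoly (c1 k)) l y * y k + Qpoly (c1 k) y * (if k = l then 1 else 0) := by
      intro k
      rw [fderiv_mul_apply' ((hDQ (c1 k)) y) (differentiableAt_coord k y), fderiv_coord]
      rfl
    rw [Finset.sum_congr rfl fun k _ => e k, Finset.sum_add_distrib]
    congr 1
    simp [Finset.sum_ite_eq', mul_ite, mul_one, mul_zero]
  have hfdP : ∀ i, fderiv ℝ (Pfun Γ i) y (Pi.single l 1)
      = 2 * (∑ k, Γ i l k y * y k) + ∑ j, ∑ k, pd (Γ i j k) l y * y j * y k := by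
    intro i
    have hterm : ∀ j k : Fin n, DifferentiableAt ℝ (fun y' => Γ i j k y' * y' j * y' k) y :=
      fun j k => ((hΓd i j k y hy).mul (differentiableAt_coord j y)).mul
        (differentiableAt_coord k y)
    have e0 : fderiv ℝ (Pfun Γ i) y (Pi.single l 1)
        = ∑ j, ∑ k, fderiv ℝ (fun y' => Γ i j k y' * y' j * y' k) y (Pi.single l 1) := by
      have h1 : fderiv ℝ (Pfun Γ i) y (Pi.single l 1)
          = ∑ j, fderiv ℝ (fun y' => ∑ k, Γ i j k y' * y' j * y' k) y (Pi.single l 1) := by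
        show fderiv ℝ (fun y' => ∑ j, ∑ k, Γ i j k y' * y' j * y' k) y (Pi.single l 1) = _
        exact fderiv_sum_apply' Finset.univ
          (fun j y' => ∑ k, Γ i j k y' * y' j * y' k)
          (fun j _ => DifferentiableAt.fun_sum fun k _ => hterm j k) _
      rw [h1]
      exact Finset.sum_congr rfl fun j _ => fderiv_sum_apply' Finset.univ
        (fun k y' => Γ i j k y' * y' j * y' k) (fun k _ => hterm j k) _
    have e1 : ∀ j k : Fin n, fderiv ℝ (fun y' => Γ i j k y' * y' j * y' k) y (Pi.single l 1)
        = pd (Γ i j k) l y * y j * y k + (if j = l then Γ i j k y * y k else 0)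
          + (if k = l then Γ i j k y * y j else 0) := by
      intro j k
      rw [fderiv_mul_apply' ((hΓd i j k y hy).fun_mul (differentiableAt_coord j y))
        (differentiableAt_coord k y),
        fderiv_mul_apply' (hΓd i j k y hy) (differentiableAt_coord j y),
        fderiv_coord, fderiv_coord]
      simp only [pd]
      split_ifs <;> ring
    rw [e0, Finset.sum_congr rfl fun j _ => Finset.sum_congr rfl fun k _ => e1 j k]
    have hsplit : ∀ j : Fin n, ∑ k, (pd (Γ i j k) l y * y j * y k
        + (if j = l then Γ i j k y * y k else 0) + (if k = l then Γ i j k y * y j else 0))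
        = (∑ k, pd (Γ i j k) l y * y j * y k)
          + (if j = l then ∑ k, Γ i j k y * y k else 0) + Γ i j l y * y j := by
      intro j
      rw [Finset.sum_add_distrib, Finset.sum_add_distrib]
      congr 1
      · congr 1
        split_ifs <;> simp
      · simp [Finset.sum_ite_eq']
    rw [Finset.sum_congr rfl fun j _ => hsplit j, Finset.sum_add_distrib,
      Finset.sum_add_distrib]
    have hA1 : ∑ j, (if j = l then ∑ k, Γ i j k y * y k else 0)
        = ∑ k, Γ i l k y * y k := by
      simp [Finset.sum_ite_eq']
    have hA2 : ∑ j, Γ i j l y * y j = ∑ k, Γ i l k y * y k := by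
      refine Finset.sum_congr rfl fun j _ => ?_
      rw [hΓsymm i j l]
    rw [hA1, hA2]
    ring
  have hfdR : fderiv ℝ (fun y' => ∑ i, pd (Qpoly c0) i y' * Pfun Γ i y') y (Pi.single l 1)
      = ∑ i, (pd (pd (Qpoly c0) i) l y * Pfun Γ i y
          + pd (Qpoly c0) i y * fderiv ℝ (Pfun Γ i) y (Pi.single l 1)) := by
    rw [fderiv_sum_apply' Finset.univ (fun i y' => pd (Qpoly c0) i y' * Pfun Γ i y')
      (fun i _ => ((hDpd i) y).mul (hPd i y hy)) _]
    refine Finset.sum_congr rfl fun i _ => ?_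
    rw [fderiv_mul_apply' ((hDpd i) y) (hPd i y hy)]
    rfl
  have step4 : (∑ k, pd (Qpoly (c1 k)) l y * y k) + Qpoly (c1 l) y
      = (∑ i, pd (pd (Qpoly c0) i) l y * Pfun Γ i y)
        + ∑ i, pd (Qpoly c0) i y
            * (2 * (∑ k, Γ i l k y * y k) + ∑ j, ∑ k, pd (Γ i j k) l y * y j * y k) := by
    rw [← hfdL, hfd, hfdR, Finset.sum_congr rfl fun i (_ : i ∈ Finset.univ) => by rw [hfdP i],
      Finset.sum_add_distrib]
  -- Final assembly
  have h1 := step1 y hy l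
  rw [hpdx l y]
  simp only [hpdy']
  have hW : ∑ i, pd (Qpoly c0) i y
        * (2 * (∑ k, Γ i l k y * y k) + ∑ j, ∑ k, pd (Γ i j k) l y * y j * y k)
      = 2 * ∑ i, ((∑ k, Γ i l k y * y k)
          + (1 / 2) * ∑ j, ∑ k, pd (Γ i j k) l y * y j * y k) * pd (Qpoly c0) i y := by
    rw [Finset.mul_sum]
    exact Finset.sum_congr rfl fun i _ => by ring
  rw [hW] at step4
  linarith [h1, step4]
end

section
/- Let F = A^{1/m} be an m-th root Finsler metric on an open subset U ⊆ ℝⁿ whose Hessian matrix (A_{ij}) is invertible, so the spray coefficients are G^i = (1/2)(A_{0j} − A_{x^j}) A^{ij}. Suppose there exist functions Γ^i_{jk}(y), smooth on ℝⁿ ∖ {0}, symmetric in j and k, positively homogeneous of degree 0 in y, such that A_{x^l} = [ Γ^i_{lk} y^k + (1/2) Γ^i_{jk,l} y^j y^k ] A_i for every l, where Γ^i_{jk,l} = ∂Γ^i_{jk}/∂y^l. Then G^i = (1/2) Γ^i_{jk}(y) y^j y^k, i.e. F is an Antonelli metric. -/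
open scoped BigOperators

section Aux
variable {n : ℕ}

lemma pd_congr {f g : (Fin n → ℝ) → ℝ} {y : Fin n → ℝ} (h : f =ᶠ[nhds y] g) (l : Fin n) :
    pd f l y = pd g l y := by
  unfold pd; rw [h.fderiv_eq]

lemma pd_sum {ι : Type*} (s : Finset ι) (f : ι → (Fin n → ℝ) → ℝ) {y : Fin n → ℝ}
    (hf : ∀ i ∈ s, DifferentiableAt ℝ (f i) y) (l : Fin n) :
    pd (fun z => ∑ i ∈ s, f i z) l y = ∑ i ∈ s, pd (f i) l y := by
  unfold pd
  rw [fderiv_fun_sum hf]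
  simp

lemma pd_mul {f g : (Fin n → ℝ) → ℝ} {y : Fin n → ℝ}
    (hf : DifferentiableAt ℝ f y) (hg : DifferentiableAt ℝ g y) (l : Fin n) :
    pd (fun z => f z * g z) l y = pd f l y * g y + f y * pd g l y := by
  unfold pd
  rw [fderiv_fun_mul hf hg]
  simp
  ring

lemma diffAt_coord (j : Fin n) (y : Fin n → ℝ) :
    DifferentiableAt ℝ (fun z : Fin n → ℝ => z j) y :=
  (ContinuousLinearMap.proj j : (Fin n → ℝ) →L[ℝ] ℝ).differentiableAt

lemma pd_coord (j l : Fin n) (y : Fin n → ℝ) :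
    pd (fun z : Fin n → ℝ => z j) l y = if j = l then 1 else 0 := by
  unfold pd
  rw [show (fun z : Fin n → ℝ => z j)
      = (ContinuousLinearMap.proj j : (Fin n → ℝ) →L[ℝ] ℝ) from rfl]
  rw [ContinuousLinearMap.fderiv]
  simp [Pi.single_apply]

lemma fderiv_apply_pi {f : (Fin n → ℝ) → ℝ} {y : Fin n → ℝ}
    (v : Fin n → ℝ) :
    fderiv ℝ f y v = ∑ l, v l * pd f l y := by
  have hv : v = ∑ l, v l • (Pi.single l 1 : Fin n → ℝ) := by
    funext j
    simp [Pi.single_apply]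
  conv_lhs => rw [hv]
  rw [map_sum]
  simp [pd]

lemma euler_zero {f : (Fin n → ℝ) → ℝ} {y : Fin n → ℝ} (hy : y ≠ 0)
    (hf : DifferentiableAt ℝ f y)
    (hhom : ∀ t : ℝ, 0 < t → f (t • y) = f y) :
    ∑ l, y l * pd f l y = 0 := by
  have h1 : HasDerivAt (fun t : ℝ => f (t • y)) (fderiv ℝ f y y) 1 := by
    have hs : HasDerivAt (fun t : ℝ => t • y) y 1 := by
      simpa using (hasDerivAt_id (1:ℝ)).smul_const y
    have hfd : HasFDerivAt f (fderiv ℝ f y) ((1:ℝ) • y) := by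
      simpa using hf.hasFDerivAt
    exact hfd.comp_hasDerivAt 1 hs
  have h2 : HasDerivAt (fun t : ℝ => f (t • y)) 0 1 := by
    have hev : (fun t : ℝ => f (t • y)) =ᶠ[nhds 1] fun _ => f y := by
      filter_upwards [isOpen_Ioi.eventually_mem (show (1:ℝ) ∈ Set.Ioi 0 by norm_num)] with t ht
      exact hhom t ht
    exact (hasDerivAt_const 1 (f y)).congr_of_eventuallyEq hev
  have h0 : fderiv ℝ f y y = 0 := h1.unique h2
  rw [← fderiv_apply_pi y, h0]

lemma diffAt_of_contDiffOn {f : (Fin n → ℝ) → ℝ}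
    (hf : ContDiffOn ℝ (⊤ : ℕ∞) f {y : Fin n → ℝ | y ≠ 0}) {y : Fin n → ℝ} (hy : y ≠ 0) :
    DifferentiableAt ℝ f y :=
  (hf.contDiffAt (isOpen_ne.mem_nhds hy)).differentiableAt (by simp)

lemma contDiffOn_pd {f : (Fin n → ℝ) → ℝ}
    (hf : ContDiffOn ℝ (⊤ : ℕ∞) f {y : Fin n → ℝ | y ≠ 0}) (l : Fin n) :
    ContDiffOn ℝ (⊤ : ℕ∞) (pd f l) {y : Fin n → ℝ | y ≠ 0} := by
  have h1 : ContDiffOn ℝ (⊤ : ℕ∞) (fderiv ℝ f) {y : Fin n → ℝ | y ≠ 0} :=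
    hf.fderiv_of_isOpen isOpen_ne (le_of_eq ENat.coe_top_add_one)
  exact h1.clm_apply contDiffOn_const

lemma contDiff_poly {m : ℕ} (c : (Fin m → Fin n) → ℝ) :
    ContDiff ℝ (⊤ : ℕ∞) (fun z : Fin n → ℝ => ∑ ι : Fin m → Fin n, c ι * ∏ k, z (ι k)) := by
  apply ContDiff.sum
  intro ι _
  exact contDiff_const.mul (contDiff_prod fun k _ =>
    (ContinuousLinearMap.proj (ι k) : (Fin n → ℝ) →L[ℝ] ℝ).contDiff)

end Aux

noncomputable def Cg {n : ℕ} (Γ : Fin n → Fin n → Fin n → (Fin n → ℝ) → ℝ) (i l : Fin n)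
    (y : Fin n → ℝ) : ℝ :=
  (∑ k, Γ i l k y * y k) + (1 / 2) * ∑ j, ∑ k, pd (Γ i j k) l y * y j * y k

noncomputable def Sg {n : ℕ} (Γ : Fin n → Fin n → Fin n → (Fin n → ℝ) → ℝ) (i : Fin n)
    (y : Fin n → ℝ) : ℝ :=
  ∑ j, ∑ k, Γ i j k y * y j * y k

section Gamma
variable {n : ℕ} {Γ : Fin n → Fin n → Fin n → (Fin n → ℝ) → ℝ}

lemma diffAt_Γ (hΓ : GammaAdmissible Γ) {y : Fin n → ℝ} (hy : y ≠ 0) (i j k : Fin n) :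
    DifferentiableAt ℝ (Γ i j k) y :=
  diffAt_of_contDiffOn (hΓ.1 i j k) hy

lemma diffAt_pdΓ (hΓ : GammaAdmissible Γ) {y : Fin n → ℝ} (hy : y ≠ 0) (i j k l : Fin n) :
    DifferentiableAt ℝ (pd (Γ i j k) l) y :=
  diffAt_of_contDiffOn (contDiffOn_pd (hΓ.1 i j k) l) hy

lemma diffAt_Cg (hΓ : GammaAdmissible Γ) {y : Fin n → ℝ} (hy : y ≠ 0) (i l : Fin n) :
    DifferentiableAt ℝ (Cg Γ i l) y := by
  unfold Cg
  refine DifferentiableAt.add ?_ (DifferentiableAt.const_mul ?_ _)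
  · exact DifferentiableAt.fun_sum fun k _ => (diffAt_Γ hΓ hy i l k).mul (diffAt_coord k y)
  · exact DifferentiableAt.fun_sum fun j _ => DifferentiableAt.fun_sum fun k _ =>
      ((diffAt_pdΓ hΓ hy i j k l).mul (diffAt_coord j y)).mul (diffAt_coord k y)

lemma pd_Sg (hΓ : GammaAdmissible Γ) {y : Fin n → ℝ} (hy : y ≠ 0) (i l : Fin n) :
    pd (Sg Γ i) l y = 2 * Cg Γ i l y := by
  have hd : ∀ j k : Fin n, DifferentiableAt ℝ (fun z => Γ i j k z * z j) y :=
    fun j k => (diffAt_Γ hΓ hy i j k).mul (diffAt_coord j y)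
  have h1 : pd (Sg Γ i) l y
      = ∑ j, ∑ k, ((pd (Γ i j k) l y * y j + Γ i j k y * (if j = l then 1 else 0)) * y k
          + (Γ i j k y * y j) * (if k = l then 1 else 0)) := by
    unfold Sg
    rw [pd_sum Finset.univ (fun j z => ∑ k, Γ i j k z * z j * z k)
      (fun j _ => DifferentiableAt.fun_sum fun k _ => (hd j k).mul (diffAt_coord k y)) l]
    refine Finset.sum_congr rfl fun j _ => ?_
    rw [pd_sum Finset.univ (fun k z => Γ i j k z * z j * z k)
      (fun k _ => (hd j k).mul (diffAt_coord k y)) l]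
    refine Finset.sum_congr rfl fun k _ => ?_
    rw [pd_mul (hd j k) (diffAt_coord k y) l, pd_mul (diffAt_Γ hΓ hy i j k) (diffAt_coord j y) l,
      pd_coord, pd_coord]
  rw [h1]
  have hsplit : ∀ j : Fin n,
      (∑ k, ((pd (Γ i j k) l y * y j + Γ i j k y * (if j = l then 1 else 0)) * y k
          + (Γ i j k y * y j) * (if k = l then 1 else 0)))
      = (∑ k, pd (Γ i j k) l y * y j * y k)
        + ((if j = l then ∑ k, Γ i j k y * y k else 0) + Γ i j l y * y j) := by
    intro j
    have : ∀ k : Fin n,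
        ((pd (Γ i j k) l y * y j + Γ i j k y * (if j = l then 1 else 0)) * y k
          + (Γ i j k y * y j) * (if k = l then 1 else 0))
        = pd (Γ i j k) l y * y j * y k + (if j = l then Γ i j k y * y k else 0)
          + (if k = l then Γ i j k y * y j else 0) := by
      intro k
      by_cases hj : j = l <;> by_cases hk : k = l <;> simp [hj, hk] <;> ring
    rw [Finset.sum_congr rfl fun k _ => this k]
    rw [Finset.sum_add_distrib, Finset.sum_add_distrib]
    have e1 : (∑ k, if j = l then Γ i j k y * y k else 0)
        = (if j = l then ∑ k, Γ i j k y * y k else 0) := by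
      by_cases hj : j = l <;> simp [hj]
    have e2 : (∑ k : Fin n, if k = l then Γ i j k y * y j else 0) = Γ i j l y * y j := by
      simp [Finset.sum_ite_eq']
    rw [e1, e2, add_assoc]
  rw [Finset.sum_congr rfl fun j _ => hsplit j]
  rw [Finset.sum_add_distrib, Finset.sum_add_distrib]
  have hdel : (∑ j, if j = l then ∑ k, Γ i j k y * y k else 0) = ∑ k, Γ i l k y * y k := by
    simp [Finset.sum_ite_eq']
  have hsymm : (∑ j, Γ i j l y * y j) = ∑ k, Γ i l k y * y k :=
    Finset.sum_congr rfl fun j _ => by rw [hΓ.2.1 i j l]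
  rw [hdel, hsymm]
  unfold Cg
  ring

lemma sum_Cg (hΓ : GammaAdmissible Γ) {y : Fin n → ℝ} (hy : y ≠ 0) (i : Fin n) :
    ∑ l, y l * Cg Γ i l y = Sg Γ i y := by
  have hE : ∀ j k : Fin n, ∑ l, y l * pd (Γ i j k) l y = 0 :=
    fun j k => euler_zero hy (diffAt_Γ hΓ hy i j k) (hΓ.2.2 i j k y hy)
  unfold Cg Sg
  have hterm : ∀ l : Fin n,
      y l * ((∑ k, Γ i l k y * y k) + (1 / 2) * ∑ j, ∑ k, pd (Γ i j k) l y * y j * y k)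
      = (∑ k, Γ i l k y * y l * y k)
        + ∑ j, ∑ k, y l * ((1/2) * (pd (Γ i j k) l y * y j * y k)) := by
    intro l
    rw [mul_add]
    congr 1
    · rw [Finset.mul_sum]; exact Finset.sum_congr rfl fun k _ => by ring
    · simp only [Finset.mul_sum]
  rw [Finset.sum_congr rfl fun l _ => hterm l, Finset.sum_add_distrib]
  have p2 : (∑ l, ∑ j, ∑ k, y l * ((1/2) * (pd (Γ i j k) l y * y j * y k))) = 0 := by
    rw [Finset.sum_comm]
    refine Finset.sum_eq_zero fun j _ => ?_
    rw [Finset.sum_comm]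
    refine Finset.sum_eq_zero fun k _ => ?_
    have : (∑ l, y l * ((1/2) * (pd (Γ i j k) l y * y j * y k)))
        = (∑ l, y l * pd (Γ i j k) l y) * ((1/2) * (y j * y k)) := by
      rw [Finset.sum_mul]; exact Finset.sum_congr rfl fun l _ => by ring
    rw [this, hE j k, zero_mul]
  rw [p2, add_zero]

lemma sum_pd_Cg (hΓ : GammaAdmissible Γ) {y : Fin n → ℝ} (hy : y ≠ 0) (i j : Fin n) :
    ∑ l, y l * pd (Cg Γ i l) j y = Cg Γ i j y := by
  have hΦΨ : (fun z => ∑ l, z l * Cg Γ i l z) =ᶠ[nhds y] Sg Γ i := by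
    filter_upwards [isOpen_ne.eventually_mem hy] with z hz
    exact sum_Cg hΓ hz i
  have hL := pd_congr hΦΨ j
  have hL2 : (∑ l, pd (fun z => z l * Cg Γ i l z) j y) = pd (Sg Γ i) j y :=
    (pd_sum Finset.univ (fun l z => z l * Cg Γ i l z)
      (fun l _ => (diffAt_coord l y).mul (diffAt_Cg hΓ hy i l)) j).symm.trans hL
  have hterm : ∀ l : Fin n, pd (fun z => z l * Cg Γ i l z) j y
      = (if l = j then 1 else 0) * Cg Γ i l y + y l * pd (Cg Γ i l) j y := by
    intro l
    rw [pd_mul (diffAt_coord l y) (diffAt_Cg hΓ hy i l) j, pd_coord]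
  rw [Finset.sum_congr rfl fun l _ => hterm l, Finset.sum_add_distrib] at hL2
  simp only [ite_mul, one_mul, zero_mul, Finset.sum_ite_eq', Finset.mem_univ, if_true] at hL2
  rw [pd_Sg hΓ hy i j] at hL2
  linarith [hL2]

end Gamma

/-- If an `m`-th root metric `F = A^{1/m}` satisfies
`A_{x^l} = [Γ^i_{lk} y^k + (1/2) Γ^i_{jk,l} y^j y^k] A_i` for some admissible family
`Γ^i_{jk}(y)`, then `G^i = (1/2) Γ^i_{jk}(y) y^j y^k`, i.e. `F` is an Antonelli metric. -/
theorem antonelli_mth_root_sufficient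
    {n m : ℕ} (hm : 2 ≤ m)
    (U : Set (Fin n → ℝ)) (hU : IsOpen U)
    (a : (Fin m → Fin n) → (Fin n → ℝ) → ℝ)
    (ha_smooth : ∀ ι, ContDiffOn ℝ (⊤ : ℕ∞) (a ι) U)
    (ha_symm : ∀ (ι : Fin m → Fin n) (σ : Equiv.Perm (Fin m)), a (ι ∘ σ) = a ι)
    (A : (Fin n → ℝ) → (Fin n → ℝ) → ℝ)
    (hA : ∀ x ∈ U, ∀ y : Fin n → ℝ, A x y = ∑ ι : Fin m → Fin n, a ι x * ∏ k, y (ι k))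
    (hApos : ∀ x ∈ U, ∀ y : Fin n → ℝ, y ≠ 0 → 0 < A x y)
    -- (A^{ij}) : the inverse of the Hessian (A_{ij}) = (∂²A/∂y^i∂y^j)
    (Ainv : (Fin n → ℝ) → (Fin n → ℝ) → Matrix (Fin n) (Fin n) ℝ)
    (hAinv : ∀ x ∈ U, ∀ y : Fin n → ℝ, y ≠ 0 →
      (Matrix.of fun i j => pdy (pdy A j) i x y) * Ainv x y = 1 ∧
      Ainv x y * (Matrix.of fun i j => pdy (pdy A j) i x y) = 1)
    (Γ : Fin n → Fin n → Fin n → (Fin n → ℝ) → ℝ)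
    (hΓ : GammaAdmissible Γ)
    (hax : ∀ l : Fin n, ∀ x ∈ U, ∀ y : Fin n → ℝ, y ≠ 0 →
      pdx A l x y
        = ∑ i, ((∑ k, Γ i l k y * y k)
            + (1 / 2) * ∑ j, ∑ k, pd (Γ i j k) l y * y j * y k) * pdy A i x y) :
    ∀ x ∈ U, ∀ y : Fin n → ℝ, y ≠ 0 → ∀ i : Fin n,
      (1 / 2) * ∑ j, ((∑ k, pdy (pdx A k) j x y * y k) - pdx A j x y) * Ainv x y i j
        = (1 / 2) * ∑ j, ∑ k, Γ i j k y * y j * y k := by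
  intro x hx y hy i
  have hAx : A x = fun z => ∑ ι : Fin m → Fin n, a ι x * ∏ k, z (ι k) := funext (hA x hx)
  have hsm : ContDiff ℝ (⊤ : ℕ∞) (A x) := by rw [hAx]; exact contDiff_poly (fun ι => a ι x)
  have hgc : ∀ p : Fin n, ContDiff ℝ (⊤ : ℕ∞) (fun z => pdy A p x z) := by
    intro p
    have h1 : ContDiff ℝ (⊤ : ℕ∞) (fderiv ℝ (A x)) :=
      hsm.fderiv_right (le_of_eq ENat.coe_top_add_one)
    exact h1.clm_apply contDiff_const
  have hgd : ∀ (p : Fin n) (w : Fin n → ℝ), DifferentiableAt ℝ (fun z => pdy A p x z) w :=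
    fun p w => ((hgc p).differentiable (by simp)).differentiableAt
  have hax' : ∀ l : Fin n, ∀ z : Fin n → ℝ, z ≠ 0 →
      pdx A l x z = ∑ p, Cg Γ p l z * pdy A p x z := by
    intro l z hz
    simpa only [Cg] using hax l x hx z hz
  have hkey : ∀ k jj : Fin n, pdy (pdx A k) jj x y
      = ∑ p, (pd (Cg Γ p k) jj y * pdy A p x y + Cg Γ p k y * pdy (pdy A p) jj x y) := by
    intro k jj
    have hev : (fun z => pdx A k x z) =ᶠ[nhds y] (fun z => ∑ p, Cg Γ p k z * pdy A p x z) := by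
      filter_upwards [isOpen_ne.eventually_mem hy] with z hz
      exact hax' k z hz
    have h0 : pdy (pdx A k) jj x y = pd (fun z => pdx A k x z) jj y := rfl
    rw [h0, pd_congr hev jj]
    have hps := pd_sum Finset.univ (fun p z => Cg Γ p k z * pdy A p x z)
      (fun p _ => (diffAt_Cg hΓ hy p k).mul (hgd p y)) jj
    rw [hps]
    refine Finset.sum_congr rfl fun p _ => ?_
    rw [pd_mul (diffAt_Cg hΓ hy p k) (hgd p y) jj]
    rfl
  have hv : ∀ jj : Fin n, (∑ k, pdy (pdx A k) jj x y * y k) - pdx A jj x y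
      = ∑ p, Sg Γ p y * pdy (pdy A p) jj x y := by
    intro jj
    have e1 : (∑ k, pdy (pdx A k) jj x y * y k)
        = ∑ k, ∑ p, (y k * (pd (Cg Γ p k) jj y * pdy A p x y)
            + y k * (Cg Γ p k y * pdy (pdy A p) jj x y)) := by
      refine Finset.sum_congr rfl fun k _ => ?_
      rw [hkey k jj, Finset.sum_mul]
      refine Finset.sum_congr rfl fun p _ => by ring
    rw [e1, Finset.sum_comm]
    have e2 : ∀ p : Fin n, (∑ k, (y k * (pd (Cg Γ p k) jj y * pdy A p x y)
        + y k * (Cg Γ p k y * pdy (pdy A p) jj x y)))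
        = (∑ k, y k * pd (Cg Γ p k) jj y) * pdy A p x y
          + (∑ k, y k * Cg Γ p k y) * pdy (pdy A p) jj x y := by
      intro p
      rw [Finset.sum_add_distrib, Finset.sum_mul, Finset.sum_mul]
      congr 1 <;> exact Finset.sum_congr rfl fun k _ => by ring
    rw [Finset.sum_congr rfl fun p _ => by
      rw [e2 p, sum_pd_Cg hΓ hy p jj, sum_Cg hΓ hy p]]
    rw [Finset.sum_add_distrib, hax' jj y hy]
    ring
  have h2 := (hAinv x hx y hy).2
  have hAM : ∀ p : Fin n, (∑ jj, Ainv x y i jj * pdy (pdy A p) jj x y)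
      = if i = p then 1 else 0 := by
    intro p
    have hmm := congrFun (congrFun h2 i) p
    rw [Matrix.mul_apply] at hmm
    simpa [Matrix.one_apply] using hmm
  calc (1/2) * ∑ jj, ((∑ k, pdy (pdx A k) jj x y * y k) - pdx A jj x y) * Ainv x y i jj
      = (1/2) * ∑ jj, (∑ p, Sg Γ p y * pdy (pdy A p) jj x y) * Ainv x y i jj := by
        rw [Finset.sum_congr rfl fun jj _ => by rw [hv jj]]
    _ = (1/2) * ∑ p, Sg Γ p y * (∑ jj, Ainv x y i jj * pdy (pdy A p) jj x y) := by
        congr 1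
        have e5 : ∀ jj : Fin n, (∑ p, Sg Γ p y * pdy (pdy A p) jj x y) * Ainv x y i jj
            = ∑ p, Sg Γ p y * (Ainv x y i jj * pdy (pdy A p) jj x y) := by
          intro jj; rw [Finset.sum_mul]; exact Finset.sum_congr rfl fun p _ => by ring
        rw [Finset.sum_congr rfl fun jj _ => e5 jj, Finset.sum_comm]
        exact Finset.sum_congr rfl fun p _ => by rw [Finset.mul_sum]
    _ = (1/2) * ∑ p, Sg Γ p y * (if i = p then 1 else 0) := by
        rw [Finset.sum_congr rfl fun p _ => by rw [hAM p]]
    _ = (1/2) * Sg Γ i y := by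
        simp [mul_ite, mul_one, mul_zero, Finset.sum_ite_eq]
    _ = (1/2) * ∑ j, ∑ k, Γ i j k y * y j * y k := rfl
end

section
/- Let F = A^{1/m} be an m-th root Finsler metric on an open subset U ⊆ ℝⁿ whose Hessian matrix (A_{ij}) is invertible with inverse (A^{ij}). Then the matrix with entries A^{−2/m} [ m A A^{ij} + ((m − 2)/(m − 1)) y^i y^j ] is the inverse of the fundamental tensor (g_{ij}), where g_{ij} = (A^{2/m − 2}/m²) [ m A A_{ij} + (2 − m) A_i A_j ]. -/
open scoped BigOperators

section FTIAux
open Matrix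

lemma vvmul {n : ℕ} (a b : Fin n → ℝ) (M : Matrix (Fin n) (Fin n) ℝ) :
    vecMulVec a b * M = vecMulVec a (b ᵥ* M) := by
  ext i j
  simp only [Matrix.mul_apply, vecMulVec_apply, Matrix.vecMul, dotProduct,
    Finset.mul_sum]
  exact Finset.sum_congr rfl fun k _ => by ring

lemma mulvv {n : ℕ} (M : Matrix (Fin n) (Fin n) ℝ) (a b : Fin n → ℝ) :
    M * vecMulVec a b = vecMulVec (M *ᵥ a) b := by
  ext i j
  simp only [Matrix.mul_apply, vecMulVec_apply, Matrix.mulVec, dotProduct,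
    Finset.sum_mul]
  exact Finset.sum_congr rfl fun k _ => by ring

lemma vvmulvec {n : ℕ} (a b c : Fin n → ℝ) :
    vecMulVec a b *ᵥ c = (b ⬝ᵥ c) • a := by
  ext i
  simp only [Matrix.mulVec, vecMulVec_apply, dotProduct, Pi.smul_apply,
    smul_eq_mul, Finset.sum_mul]
  exact Finset.sum_congr rfl fun k _ => by ring

lemma vv_smul_left {n : ℕ} (r : ℝ) (a b : Fin n → ℝ) :
    vecMulVec (r • a) b = r • vecMulVec a b := by
  ext i j; simp [vecMulVec_apply, mul_assoc]

lemma vv_smul_right {n : ℕ} (r : ℝ) (a b : Fin n → ℝ) :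
    vecMulVec a (r • b) = r • vecMulVec a b := by
  ext i j; simp [vecMulVec_apply]; ring

lemma aux_one {n : ℕ} (c1 c2 p α β r s d : ℝ)
    (B C : Matrix (Fin n) (Fin n) ℝ) (v w : Fin n → ℝ)
    (hBC : B * C = 1) (hBw : B *ᵥ w = r • v) (hvC : v ᵥ* C = s • w)
    (hvw : v ⬝ᵥ w = d)
    (hzero : p * β * r + α * p * s + α * β * d = 0)
    (hone : c1 * c2 * (p * p) = 1) :
    (c1 • (p • B + α • vecMulVec v v)) * (c2 • (p • C + β • vecMulVec w w)) = 1 := by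
  simp only [Matrix.smul_mul, Matrix.mul_smul, Matrix.add_mul, Matrix.mul_add, hBC,
    mulvv, vvmul, hBw, hvC, vv_smul_left, vv_smul_right, vvmulvec, smul_smul, hvw]
  ext i j
  simp only [Matrix.add_apply, Matrix.smul_apply, Matrix.one_apply, vecMulVec_apply,
    smul_eq_mul, mul_ite, mul_one, mul_zero]
  split_ifs with h
  · linear_combination hone + (c1 * c2 * (v i * w j)) * hzero
  · linear_combination (c1 * c2 * (v i * w j)) * hzero

lemma poly_contDiff {n m : ℕ} (c : (Fin m → Fin n) → ℝ) :
    ContDiff ℝ (⊤ : ℕ∞) (fun y : Fin n → ℝ => ∑ ι : Fin m → Fin n, c ι * ∏ k, y (ι k)) := by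
  apply ContDiff.sum
  intro ι _
  exact contDiff_const.mul (contDiff_prod fun k _ =>
    (ContinuousLinearMap.proj (ι k) : (Fin n → ℝ) →L[ℝ] ℝ).contDiff)

lemma poly_hom {n m : ℕ} (c : (Fin m → Fin n) → ℝ) (t : ℝ) (y : Fin n → ℝ) :
    (∑ ι : Fin m → Fin n, c ι * ∏ k, (t • y) (ι k))
      = t ^ m * ∑ ι : Fin m → Fin n, c ι * ∏ k, y (ι k) := by
  rw [Finset.mul_sum]
  refine Finset.sum_congr rfl fun ι _ => ?_
  have : (∏ k, (t • y) (ι k)) = t ^ m * ∏ k, y (ι k) := by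
    simp only [Pi.smul_apply, smul_eq_mul, Finset.prod_mul_distrib, Finset.prod_const,
      Finset.card_univ, Fintype.card_fin]
  rw [this]; ring

lemma euler_general {n d : ℕ} {f : (Fin n → ℝ) → ℝ} {y : Fin n → ℝ}
    (hf : DifferentiableAt ℝ f y)
    (hom : ∀ t : ℝ, 0 < t → f (t • y) = t ^ d * f y) :
    fderiv ℝ f y y = d * f y := by
  have hs : HasDerivAt (fun t : ℝ => t • y) y 1 := by
    simpa using (hasDerivAt_id (1 : ℝ)).smul_const y
  have hfy : HasFDerivAt f (fderiv ℝ f y) ((1 : ℝ) • y) := by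
    rw [one_smul]; exact hf.hasFDerivAt
  have h1 : HasDerivAt (fun t : ℝ => f (t • y)) (fderiv ℝ f y y) 1 := by
    have := hfy.comp_hasDerivAt 1 hs
    exact this
  have h2 : HasDerivAt (fun t : ℝ => t ^ d * f y) ((d : ℝ) * f y) 1 := by
    simpa using (hasDerivAt_pow d (1 : ℝ)).mul_const (f y)
  have heq : (fun t : ℝ => f (t • y)) =ᶠ[nhds 1] fun t => t ^ d * f y := by
    filter_upwards [eventually_gt_nhds (show (0:ℝ) < 1 by norm_num)] with t ht
    exact hom t ht
  have h2' : HasDerivAt (fun t : ℝ => f (t • y)) ((d : ℝ) * f y) 1 :=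
    h2.congr_of_eventuallyEq heq
  exact h1.unique h2'

lemma grad_hom {n m : ℕ} {P : (Fin n → ℝ) → ℝ} (hP : ContDiff ℝ (⊤ : ℕ∞) P)
    (hm : 1 ≤ m)
    (hom : ∀ (t : ℝ) (y : Fin n → ℝ), P (t • y) = t ^ m * P y)
    (t : ℝ) (ht : t ≠ 0) (z w : Fin n → ℝ) :
    fderiv ℝ P (t • z) w = t ^ (m - 1) * fderiv ℝ P z w := by
  have hPd : Differentiable ℝ P := hP.differentiable (by simp)
  set L : (Fin n → ℝ) →L[ℝ] (Fin n → ℝ) := t • ContinuousLinearMap.id ℝ (Fin n → ℝ) with hLdef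
  have hL : HasFDerivAt (fun z' : Fin n → ℝ => t • z') L z := by
    have := L.hasFDerivAt (x := z)
    convert this using 2
    simp [hLdef]
  have h1 : HasFDerivAt (fun z' => P (t • z')) ((fderiv ℝ P (t • z)).comp L) z :=
    HasFDerivAt.comp z (hPd (t • z)).hasFDerivAt hL
  have h2 : HasFDerivAt (fun z' => P (t • z')) ((t ^ m) • fderiv ℝ P z) z := by
    have := (hPd z).hasFDerivAt.const_mul (t ^ m)
    have heq : (fun z' => t ^ m * P z') = fun z' => P (t • z') := by
      funext z'; rw [hom t z']
    rwa [heq] at this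
  have hEq := h1.unique h2
  have hw : (fderiv ℝ P (t • z)).comp L w = ((t ^ m) • fderiv ℝ P z) w := by rw [hEq]
  have hw' : t * fderiv ℝ P (t • z) w = t ^ m * fderiv ℝ P z w := by
    simpa [hLdef, _root_.map_smul, smul_eq_mul] using hw
  have hpow : t * t ^ (m - 1) = t ^ m := by
    rw [← pow_succ']
    congr 1
    omega
  apply mul_left_cancel₀ ht
  rw [hw', ← mul_assoc, hpow]

lemma fderiv_eval_sum {n : ℕ} (L : (Fin n → ℝ) →L[ℝ] ℝ) (y : Fin n → ℝ) :
    L y = ∑ i, y i * L (Pi.single i 1) := by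
  have hy : y = ∑ i, y i • (Pi.single i (1:ℝ) : Fin n → ℝ) := by
    ext j
    simp [Pi.single_apply, Finset.sum_ite_eq']
  conv_lhs => rw [hy]
  simp [map_sum]

variable {n : ℕ} {P : (Fin n → ℝ) → ℝ}

lemma fderiv_contDiff (hP : ContDiff ℝ (⊤ : ℕ∞) P) :
    ContDiff ℝ (⊤ : ℕ∞) (fderiv ℝ P) :=
  hP.fderiv_right (by exact_mod_cast le_top)

lemma snd_partial_hasFDeriv (hP : ContDiff ℝ (⊤ : ℕ∞) P) (y w : Fin n → ℝ) :
    HasFDerivAt (fun z => fderiv ℝ P z w)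
      ((ContinuousLinearMap.apply ℝ ℝ w).comp (fderiv ℝ (fderiv ℝ P) y)) y := by
  have h := ((ContinuousLinearMap.apply ℝ ℝ w).hasFDerivAt).comp y
    (((fderiv_contDiff hP).differentiable (by simp)) y).hasFDerivAt
  exact h

lemma snd_partial_eq (hP : ContDiff ℝ (⊤ : ℕ∞) P) (y v w : Fin n → ℝ) :
    fderiv ℝ (fun z => fderiv ℝ P z w) y v = fderiv ℝ (fderiv ℝ P) y v w := by
  rw [(snd_partial_hasFDeriv hP y w).fderiv]
  rfl

lemma snd_partial_diff (hP : ContDiff ℝ (⊤ : ℕ∞) P) (y w : Fin n → ℝ) :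
    DifferentiableAt ℝ (fun z => fderiv ℝ P z w) y :=
  (snd_partial_hasFDeriv hP y w).differentiableAt

lemma snd_symm (hP : ContDiff ℝ (⊤ : ℕ∞) P) (y v w : Fin n → ℝ) :
    fderiv ℝ (fun z => fderiv ℝ P z w) y v = fderiv ℝ (fun z => fderiv ℝ P z v) y w := by
  rw [snd_partial_eq hP, snd_partial_eq hP]
  exact (hP.contDiffAt.isSymmSndFDerivAt (by
    have : ((2:ℕ∞) : WithTop ℕ∞) ≤ ((⊤:ℕ∞) : WithTop ℕ∞) := by exact_mod_cast le_top
    simpa using this)).eq v w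

end FTIAux

open Matrix


/-- For an `m`-th root Finsler metric `F = A^{1/m}` with invertible
Hessian `(A_{ij})`, the matrix with entries
`A^{−2/m} [ m A A^{ij} + ((m−2)/(m−1)) y^i y^j ]` is the inverse of the fundamental
tensor `(g_{ij})`, where `g_{ij} = (A^{2/m−2}/m²) [ m A A_{ij} + (2 − m) A_i A_j ]`. -/
theorem fundamental_tensor_inverse_mth_root
    {n m : ℕ} (hm : 2 ≤ m)
    (U : Set (Fin n → ℝ)) (hU : IsOpen U)
    (a : (Fin m → Fin n) → (Fin n → ℝ) → ℝ)
    (ha_smooth : ∀ ι, ContDiffOn ℝ (⊤ : ℕ∞) (a ι) U)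
    (ha_symm : ∀ (ι : Fin m → Fin n) (σ : Equiv.Perm (Fin m)), a (ι ∘ σ) = a ι)
    (A : (Fin n → ℝ) → (Fin n → ℝ) → ℝ)
    (hA : ∀ x ∈ U, ∀ y : Fin n → ℝ, A x y = ∑ ι : Fin m → Fin n, a ι x * ∏ k, y (ι k))
    (hApos : ∀ x ∈ U, ∀ y : Fin n → ℝ, y ≠ 0 → 0 < A x y)
    -- (A^{ij}) : the inverse of the Hessian (A_{ij}) = (∂²A/∂y^i∂y^j)
    (Ainv : (Fin n → ℝ) → (Fin n → ℝ) → Matrix (Fin n) (Fin n) ℝ)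
    (hAinv : ∀ x ∈ U, ∀ y : Fin n → ℝ, y ≠ 0 →
      (Matrix.of fun i j => pdy (pdy A j) i x y) * Ainv x y = 1 ∧
      Ainv x y * (Matrix.of fun i j => pdy (pdy A j) i x y) = 1) :
    ∀ x ∈ U, ∀ y : Fin n → ℝ, y ≠ 0 →
      (Matrix.of fun i j : Fin n =>
          (A x y ^ ((2 : ℝ) / (m : ℝ) - 2) / (m : ℝ) ^ 2) *
            ((m : ℝ) * A x y * pdy (pdy A j) i x y
              + (2 - (m : ℝ)) * pdy A i x y * pdy A j x y))
        * (Matrix.of fun i j : Fin n =>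
          A x y ^ (-((2 : ℝ) / (m : ℝ))) *
            ((m : ℝ) * A x y * Ainv x y i j
              + (((m : ℝ) - 2) / ((m : ℝ) - 1)) * y i * y j)) = 1 ∧
      (Matrix.of fun i j : Fin n =>
          A x y ^ (-((2 : ℝ) / (m : ℝ))) *
            ((m : ℝ) * A x y * Ainv x y i j
              + (((m : ℝ) - 2) / ((m : ℝ) - 1)) * y i * y j))
        * (Matrix.of fun i j : Fin n =>
          (A x y ^ ((2 : ℝ) / (m : ℝ) - 2) / (m : ℝ) ^ 2) *
            ((m : ℝ) * A x y * pdy (pdy A j) i x y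
              + (2 - (m : ℝ)) * pdy A i x y * pdy A j x y)) = 1 := by
  intro x hx y hy
  obtain ⟨h1, h2⟩ := hAinv x hx y hy
  have hμ2 : (2 : ℝ) ≤ (m : ℝ) := by exact_mod_cast hm
  have hμ1 : (m : ℝ) - 1 ≠ 0 := by linarith
  have hμ0 : (m : ℝ) ≠ 0 := by linarith
  set P : (Fin n → ℝ) → ℝ := fun z => ∑ ι : Fin m → Fin n, a ι x * ∏ k, z (ι k) with hPdef
  have hPA : ∀ z, A x z = P z := fun z => hA x hx z
  have hPAf : A x = P := funext hPA
  have hP : ContDiff ℝ (⊤ : ℕ∞) P := poly_contDiff _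
  have hPd : Differentiable ℝ P := hP.differentiable (by simp)
  have hom : ∀ (t : ℝ) (z : Fin n → ℝ), P (t • z) = t ^ m * P z := fun t z => poly_hom _ t z
  -- first partials
  have hpdy1 : ∀ (i : Fin n) (z : Fin n → ℝ),
      pdy A i x z = fderiv ℝ P z (Pi.single i 1) := by
    intro i z; simp only [pdy, hPAf]
  have hpdy2 : ∀ i j : Fin n, pdy (pdy A j) i x y
      = fderiv ℝ (fun z => fderiv ℝ P z (Pi.single j 1)) y (Pi.single i 1) := by
    intro i j
    have hfun : (pdy A j) x = fun z => fderiv ℝ P z (Pi.single j 1) :=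
      funext fun z => hpdy1 j z
    simp only [pdy]
    rw [hfun]
  set v : Fin n → ℝ := fun i => fderiv ℝ P y (Pi.single i 1) with hvdef
  set Bm : Matrix (Fin n) (Fin n) ℝ := Matrix.of fun i j => pdy (pdy A j) i x y with hBmdef
  have hBm : ∀ i j, Bm i j
      = fderiv ℝ (fun z => fderiv ℝ P z (Pi.single j 1)) y (Pi.single i 1) :=
    fun i j => hpdy2 i j
  have hsymm : ∀ i j, Bm i j = Bm j i := by
    intro i j; rw [hBm, hBm]; exact snd_symm hP y _ _
  -- Euler identity, degree m
  have key1 : v ⬝ᵥ y = (m : ℝ) * A x y := by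
    have e1 : fderiv ℝ P y y = (m : ℝ) * P y :=
      euler_general (hPd y) (fun t ht => hom t y)
    have e2 : fderiv ℝ P y y = ∑ i, y i * v i := fderiv_eval_sum (fderiv ℝ P y) y
    rw [hPA]
    rw [← e1, e2, dotProduct]
    exact Finset.sum_congr rfl fun i _ => mul_comm _ _
  have key1' : y ⬝ᵥ v = (m : ℝ) * A x y := by
    rw [← key1, dotProduct, dotProduct]
    exact Finset.sum_congr rfl fun i _ => mul_comm _ _
  -- Euler identity for the gradient, degree m - 1
  have key2 : ∀ j, ∑ i, y i * Bm i j = ((m : ℝ) - 1) * v j := by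
    intro j
    have hcast : ((m - 1 : ℕ) : ℝ) = (m : ℝ) - 1 := by
      have : (1 : ℕ) ≤ m := by omega
      push_cast [this]; ring
    have e1 : fderiv ℝ (fun z => fderiv ℝ P z (Pi.single j 1)) y y
        = ((m - 1 : ℕ) : ℝ) * fderiv ℝ P y (Pi.single j 1) := by
      refine euler_general (snd_partial_diff hP y _) ?_
      intro t ht
      exact grad_hom hP (by omega) hom t (ne_of_gt ht) y (Pi.single j 1)
    have e2 : fderiv ℝ (fun z => fderiv ℝ P z (Pi.single j 1)) y y
        = ∑ i, y i * Bm i j := by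
      rw [fderiv_eval_sum (fderiv ℝ (fun z => fderiv ℝ P z (Pi.single j 1)) y) y]
      exact Finset.sum_congr rfl fun i _ => by rw [hBm]
    rw [← e2, e1, hcast]
  have hyB : y ᵥ* Bm = ((m : ℝ) - 1) • v := by
    ext j
    simp only [Matrix.vecMul, dotProduct, Pi.smul_apply, smul_eq_mul]
    exact key2 j
  have hBy : Bm *ᵥ y = ((m : ℝ) - 1) • v := by
    ext i
    simp only [Matrix.mulVec, dotProduct, Pi.smul_apply, smul_eq_mul]
    rw [← key2 i]
    exact Finset.sum_congr rfl fun j _ => by show Bm i j * y j = y j * Bm j i; rw [hsymm i j]; ring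
  -- consequences with the inverse matrix
  have hvC : v ᵥ* Ainv x y = ((m : ℝ) - 1)⁻¹ • y := by
    have e0 : (((m : ℝ) - 1) • v) ᵥ* Ainv x y = y := by
      rw [← hyB, Matrix.vecMul_vecMul, h1, Matrix.vecMul_one]
    have e0' : ((m : ℝ) - 1) • (v ᵥ* Ainv x y) = y := by
      rw [← Matrix.smul_vecMul]; exact e0
    calc v ᵥ* Ainv x y = (((m : ℝ) - 1)⁻¹ * ((m : ℝ) - 1)) • (v ᵥ* Ainv x y) := by
          rw [inv_mul_cancel₀ hμ1, one_smul]
      _ = ((m : ℝ) - 1)⁻¹ • (((m : ℝ) - 1) • (v ᵥ* Ainv x y)) := by rw [smul_smul]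
      _ = ((m : ℝ) - 1)⁻¹ • y := by rw [e0']
  have hCv : Ainv x y *ᵥ v = ((m : ℝ) - 1)⁻¹ • y := by
    have e0 : Ainv x y *ᵥ (((m : ℝ) - 1) • v) = y := by
      rw [← hBy, Matrix.mulVec_mulVec, h2, Matrix.one_mulVec]
    have e0' : ((m : ℝ) - 1) • (Ainv x y *ᵥ v) = y := by
      rw [← Matrix.mulVec_smul]; exact e0
    calc Ainv x y *ᵥ v = (((m : ℝ) - 1)⁻¹ * ((m : ℝ) - 1)) • (Ainv x y *ᵥ v) := by
          rw [inv_mul_cancel₀ hμ1, one_smul]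
      _ = ((m : ℝ) - 1)⁻¹ • (((m : ℝ) - 1) • (Ainv x y *ᵥ v)) := by rw [smul_smul]
      _ = ((m : ℝ) - 1)⁻¹ • y := by rw [e0']
  -- scalar facts
  have hA0 : 0 < A x y := hApos x hx y hy
  set Av : ℝ := A x y with hAvdef
  set c1 : ℝ := Av ^ ((2 : ℝ) / (m : ℝ) - 2) / (m : ℝ) ^ 2 with hc1def
  set c2 : ℝ := Av ^ (-((2 : ℝ) / (m : ℝ))) with hc2def
  have hone : c1 * c2 * ((m : ℝ) * Av * ((m : ℝ) * Av)) = 1 := by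
    have hAA : Av * Av = Av ^ (2 : ℝ) := by
      rw [show (2:ℝ) = ((2:ℕ):ℝ) by norm_num, Real.rpow_natCast]; ring
    have hprod : Av ^ ((2 : ℝ) / (m : ℝ) - 2) * Av ^ (-((2 : ℝ) / (m : ℝ))) * Av ^ (2:ℝ) = 1 := by
      rw [← Real.rpow_add hA0, ← Real.rpow_add hA0,
        show (2 : ℝ) / (m : ℝ) - 2 + -((2 : ℝ) / (m : ℝ)) + 2 = 0 by ring, Real.rpow_zero]
    have hμsq : (m : ℝ) ^ 2 ≠ 0 := pow_ne_zero 2 hμ0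
    calc c1 * c2 * ((m : ℝ) * Av * ((m : ℝ) * Av))
        = Av ^ ((2 : ℝ) / (m : ℝ) - 2) * Av ^ (-((2 : ℝ) / (m : ℝ))) * (Av * Av)
            * ((m : ℝ) ^ 2 / (m : ℝ) ^ 2) := by rw [hc1def, hc2def]; ring
      _ = 1 := by rw [hAA, hprod, div_self hμsq, one_mul]
  -- assemble
  have hg : (Matrix.of fun i j : Fin n =>
        c1 * ((m : ℝ) * Av * pdy (pdy A j) i x y
          + (2 - (m : ℝ)) * pdy A i x y * pdy A j x y))
      = c1 • (((m : ℝ) * Av) • Bm + (2 - (m : ℝ)) • Matrix.vecMulVec v v) := by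
    ext i j
    simp only [Matrix.of_apply, Matrix.add_apply, Matrix.smul_apply, Matrix.vecMulVec_apply,
      smul_eq_mul, hpdy1 i y, hpdy1 j y]
    rw [hBmdef]
    simp only [Matrix.of_apply]
    ring
  have hh : (Matrix.of fun i j : Fin n =>
        c2 * ((m : ℝ) * Av * Ainv x y i j
          + (((m : ℝ) - 2) / ((m : ℝ) - 1)) * y i * y j))
      = c2 • (((m : ℝ) * Av) • Ainv x y
          + (((m : ℝ) - 2) / ((m : ℝ) - 1)) • Matrix.vecMulVec y y) := by
    ext i j
    simp only [Matrix.of_apply, Matrix.add_apply, Matrix.smul_apply, Matrix.vecMulVec_apply,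
      smul_eq_mul]
    ring
  rw [hg, hh]
  constructor
  · apply aux_one c1 c2 ((m : ℝ) * Av) (2 - (m : ℝ)) (((m : ℝ) - 2) / ((m : ℝ) - 1))
      ((m : ℝ) - 1) (((m : ℝ) - 1)⁻¹) ((m : ℝ) * Av) Bm (Ainv x y) v y h1 hBy hvC key1 ?_ hone
    field_simp
    ring
  · apply aux_one c2 c1 ((m : ℝ) * Av) (((m : ℝ) - 2) / ((m : ℝ) - 1)) (2 - (m : ℝ))
      (((m : ℝ) - 1)⁻¹) ((m : ℝ) - 1) ((m : ℝ) * Av) (Ainv x y) Bm y v h2 hCv hyB key1' ?_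
      (by rw [← hone]; ring)
    field_simp
    ring
end

section
/- Let n ≥ 2, m ≥ 2, and let A : ℝⁿ ∖ {0} → ℝ be a smooth function, positively homogeneous of degree m, with A(y) > 0 for all y ≠ 0 (so that Euler's identities y^i A_i = mA and y^i A_{ij} = (m − 1) A_j hold). If the Hessian matrix (A_{ij}) is invertible at a point y ≠ 0, then the identity m A A_{ij} + (1 − m) A_i A_j = 0 (for all i, j) cannot hold at that point. -/
open scoped BigOperators

/-- Let `n ≥ 2`, `m ≥ 2`, and let `A : ℝⁿ ∖ {0} → ℝ` be smooth,
positively homogeneous of degree `m`, and positive away from the origin.  If the Hessian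
`(A_{ ij})` is invertible at a point `y₀ ≠ 0`, then the identity
`m A A_{ij} + (1 − m) A_i A_j = 0` (for all `i, j`) cannot hold at that point. -/
theorem mth_root_hessian_identity_impossible
    {n m : ℕ} (hn : 2 ≤ n) (hm : 2 ≤ m)
    (A : (Fin n → ℝ) → ℝ)
    (hA_smooth : ContDiffOn ℝ (⊤ : ℕ∞) A {y : Fin n → ℝ | y ≠ 0})
    (hA_hom : ∀ y : Fin n → ℝ, ∀ t : ℝ, 0 < t → A (t • y) = t ^ m * A y)
    (hA_pos : ∀ y : Fin n → ℝ, y ≠ 0 → 0 < A y)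
    (y₀ : Fin n → ℝ) (hy₀ : y₀ ≠ 0)
    (hHess : IsUnit ((Matrix.of fun i j => pd (fun y => pd A j y) i y₀) :
      Matrix (Fin n) (Fin n) ℝ)) :
    ¬ (∀ i j : Fin n,
        (m : ℝ) * A y₀ * pd (fun y => pd A j y) i y₀
          + (1 - (m : ℝ)) * pd A i y₀ * pd A j y₀ = 0) := by
  intro h
  set v : Fin n → ℝ := fun i => pd A i y₀ with hv
  have hApos : 0 < A y₀ := hA_pos y₀ hy₀
  have hm0 : (m : ℝ) * A y₀ ≠ 0 := by positivity
  -- The Hessian is a rank-one matrix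
  have hH : ∀ i j, pd (fun y => pd A j y) i y₀
      = (((m : ℝ) - 1) / ((m : ℝ) * A y₀)) * v i * v j := by
    intro i j
    have := h i j
    field_simp
    linarith
  -- Find a nonzero vector in the kernel
  obtain ⟨x, hx0, hxv⟩ : ∃ x : Fin n → ℝ, x ≠ 0 ∧ ∑ j, v j * x j = 0 := by
    by_cases hvz : v = 0
    · refine ⟨Pi.single ⟨0, by omega⟩ 1, ?_, by simp [hvz]⟩
      intro hc
      have := congrFun hc ⟨0, by omega⟩
      simp at this
    · obtain ⟨i, hi⟩ : ∃ i, v i ≠ 0 := by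
        by_contra hc; push_neg at hc; exact hvz (funext hc)
      obtain ⟨j, hj⟩ : ∃ j : Fin n, j ≠ i :=
        Fintype.exists_ne_of_one_lt_card (by simp only [Fintype.card_fin]; omega) i
      refine ⟨Pi.single j (v i) - Pi.single i (v j), ?_, ?_⟩
      · intro hc
        have := congrFun hc j
        simp [Pi.single_apply, hj, hj.symm] at this
        exact hi this
      · simp only [Pi.sub_apply, mul_sub, Finset.sum_sub_distrib]
        rw [Finset.sum_eq_single j (by intro b _ hb; simp [Pi.single_apply, hb]) (by simp),
            Finset.sum_eq_single i (by intro b _ hb; simp [Pi.single_apply, hb]) (by simp)]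
        simp only [Pi.single_eq_same]
        ring
  -- The matrix kills x
  have hMx : (Matrix.of fun i j => pd (fun y => pd A j y) i y₀).mulVec x = 0 := by
    funext i
    simp only [Matrix.mulVec, dotProduct, Matrix.of_apply, hH, Pi.zero_apply]
    rw [Finset.sum_congr rfl (fun k _ =>
      show ((m : ℝ) - 1) / ((m : ℝ) * A y₀) * v i * v k * x k
        = ((m : ℝ) - 1) / ((m : ℝ) * A y₀) * v i * (v k * x k) by ring)]
    rw [← Finset.mul_sum, hxv, mul_zero]
  have hinj := Matrix.mulVec_injective_iff_isUnit.mpr hHess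
  apply hx0
  have : (Matrix.of fun i j => pd (fun y => pd A j y) i y₀).mulVec x
      = (Matrix.of fun i j => pd (fun y => pd A j y) i y₀).mulVec 0 := by
    simp [hMx]
  exact hinj this
end
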